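/- arXiv:2207.05040 — 3 statements merged into one kernel-verified Lean document; each statement's English description precedes it below -/
import Mathlib

section
/- Let F be a field which is a module over a characteristic-0 principal ideal domain R, and let d ≤ n. Then 𝒯 is faithful both as a left T^Z(n,d)-supermodule and as a right T^{Z'}(n,d)-supermodule. -/
open scoped BigOperators
open Finsupp

set_option maxHeartbeats 1000000

namespace Paper

noncomputable section

variable (K : Type) [CommRing K]

/-- Coordinate model for the `d`-th tensor power `V^{⊗ d}` of a free module `V`
with basis indexed by `β`: the basis of `V^{⊗ d}` is indexed by `d`-tuples in `β`. -/
abbrev TPow (β : Type) (d : ℕ) : Type := (Fin d → β) →₀ K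

variable {β : Type} [Fintype β] [DecidableEq β]

/-- The tensor product `v 0 ⊗ v 1 ⊗ ⋯ ⊗ v (d-1)` of vectors written in coordinates. -/
def tensorOf {d : ℕ} (v : Fin d → (β →₀ K)) : TPow K β d :=
  ∑ k ∈ Fintype.piFinset (fun i => (v i).support),
    (∏ i, (v i) (k i)) • Finsupp.single k (1 : K)

/-- parity of a `Fin 3`-valued part marker: `0 = 𝔞`, `1 = 𝔠` (both even), `2 = odd`. -/
def par2 (x : Fin 3) : ZMod 2 := if x = 2 then 1 else 0

/-- total parity of a basis tuple -/
def tupleParity (p : β → Fin 3) {d : ℕ} (k : Fin d → β) : ZMod 2 := ∑ i, par2 (p (k i))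

/-- the even part of the tensor power (span of basis tuples of even total parity) -/
def evenPart (p : β → Fin 3) (d : ℕ) : Submodule K (TPow K β d) :=
  Finsupp.supported K K {k | tupleParity p k = 0}

/-- the odd part of the tensor power -/
def oddPart (p : β → Fin 3) (d : ℕ) : Submodule K (TPow K β d) :=
  Finsupp.supported K K {k | tupleParity p k = 1}

/-- the sign count `⟨σ; v⟩` for the signed place-permutation action -/
def permSign (p : β → Fin 3) {d : ℕ} (σ : Equiv.Perm (Fin d)) (k : Fin d → β) : ℕ :=
  (Finset.univ.filter fun q : Fin d × Fin d =>
     q.1 < q.2 ∧ σ⁻¹ q.2 < σ⁻¹ q.1 ∧ p (k q.1) = 2 ∧ p (k q.2) = 2).card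

/-- the signed place-permutation action of `σ ∈ S_d` on `V^{⊗ d}` -/
def permAct (p : β → Fin 3) {d : ℕ} (σ : Equiv.Perm (Fin d)) :
    TPow K β d →ₗ[K] TPow K β d :=
  Finsupp.lsum K fun k => LinearMap.toSpanSingleton K _
    (((-1 : K) ^ permSign p σ k) • Finsupp.single (k ∘ σ) (1 : K))

/-- the divided power `Γ^d V`: invariants of the signed place-permutation action -/
def Gamma (p : β → Fin 3) (d : ℕ) : Submodule K (TPow K β d) :=
  ⨅ σ : Equiv.Perm (Fin d), LinearMap.eqLocus (permAct K p σ) LinearMap.id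

/-- A calibrated family of vectors of the "supermodule" `β →₀ K`: an index set `ι`
with a partition into `𝔞`- (`part = 0`), `𝔠`- (`part = 1`) and odd (`part = 2`) parts,
a total order (realized through an `ℕ`-encoding `ord`) and the actual vectors `vec`. -/
structure CalFamily (β : Type) : Type 1 where
  ι : Type
  fin : Fintype ι
  deq : DecidableEq ι
  part : ι → Fin 3
  ord : ι → ℕ
  vec : ι → (β →₀ K)

attribute [instance] CalFamily.fin CalFamily.deq

namespace CalFamily

variable {K}
variable (F : CalFamily K β)

/-- `Seq(B,d)`: tuples in which an entry may repeat only if it is even -/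
def IsSeq {d : ℕ} (b : Fin d → F.ι) : Prop :=
  ∀ i j : Fin d, i ≠ j → b i = b j → F.part (b i) ≠ 2

/-- the inversion count `⟨b⟩` among odd entries -/
def inversions {d : ℕ} (b : Fin d → F.ι) : ℕ :=
  (Finset.univ.filter fun q : Fin d × Fin d =>
    q.1 < q.2 ∧ F.part (b q.1) = 2 ∧ F.part (b q.2) = 2 ∧ F.ord (b q.2) < F.ord (b q.1)).card

/-- the `S_d`-orbit of a tuple -/
def orbit {d : ℕ} (b : Fin d → F.ι) : Finset (Fin d → F.ι) :=
  Finset.univ.filter fun b' => ∃ σ : Equiv.Perm (Fin d), b' = b ∘ σ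

/-- the element `x_b ∈ Γ^d V` -/
def x {d : ℕ} (b : Fin d → F.ι) : TPow K β d :=
  ∑ b' ∈ F.orbit b,
    ((-1 : K) ^ (F.inversions b + F.inversions b')) • tensorOf K (fun i => F.vec (b' i))

/-- the factorial `[b]^!_𝔠` -/
def mfac {d : ℕ} (b : Fin d → F.ι) : ℕ :=
  ∏ c ∈ Finset.univ.filter (fun c : F.ι => F.part c = 1),
    (Finset.univ.filter fun i : Fin d => b i = c).card.factorial

/-- the element `y_b = [b]^!_𝔠 • x_b` -/
def y {d : ℕ} (b : Fin d → F.ι) : TPow K β d := F.mfac b • F.x b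

end CalFamily

/-- the modified divided power `Γ̃^d V`, as a submodule of the coordinate tensor power -/
def gammaTilde (F : CalFamily K β) (d : ℕ) : Submodule K (TPow K β d) :=
  Submodule.span K {w | ∃ b : Fin d → F.ι, F.IsSeq b ∧ w = F.y b}

/-- the standard calibrated family: the basis of `β →₀ K` given by `β` itself -/
def stdFam (p : β → Fin 3) (ord : β → ℕ) : CalFamily K β :=
  ⟨β, inferInstance, inferInstance, p, ord, fun b => Finsupp.single b 1⟩

/-- the Koszul sign `⟨a, v⟩ = #{(k,l) | k > l, a_k odd, v_l odd}` -/
def koszul {α : Type} (pA : α → Fin 3) (pV : β → Fin 3) {d : ℕ}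
    (a : Fin d → α) (k : Fin d → β) : ℕ :=
  (Finset.univ.filter fun q : Fin d × Fin d =>
    q.2 < q.1 ∧ pA (a q.1) = 2 ∧ pV (k q.2) = 2).card

/-- the (left) action of an element `x` of the `d`-th tensor power of a superalgebra `A`
(with basis `α` and structure constants `act`) on the `d`-th tensor power of a
supermodule with basis `β`, including Koszul signs. -/
def kact {α : Type} [Fintype α] [DecidableEq α]
    (pA : α → Fin 3) (pV : β → Fin 3) (act : α → β → (β →₀ K)) {d : ℕ}
    (x : TPow K α d) : TPow K β d →ₗ[K] TPow K β d :=
  Finsupp.lsum K fun k => LinearMap.toSpanSingleton K _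
    (x.sum fun a r => (r * (-1 : K) ^ koszul pA pV a k) • tensorOf K (fun i => act (a i) (k i)))

/-- the right action analogue of `kact` (for right supermodules), `v ↦ v · x` -/
def rkact {α : Type} [Fintype α] [DecidableEq α]
    (pA : α → Fin 3) (pV : β → Fin 3) (ract : β → α → (β →₀ K)) {d : ℕ}
    (x : TPow K α d) : TPow K β d →ₗ[K] TPow K β d :=
  Finsupp.lsum K fun k => LinearMap.toSpanSingleton K _
    (x.sum fun a r => (r * (-1 : K) ^ koszul pV pA k a) • tensorOf K (fun i => ract (k i) (a i)))

/-- shortest coset representatives for `(S_c × S_e) \ S_{c+e}` -/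
def shuffles (c e : ℕ) : Finset (Equiv.Perm (Fin (c + e))) :=
  Finset.univ.filter fun σ =>
    (∀ i j : Fin (c + e), (i : ℕ) < c → (j : ℕ) < c → i < j → σ⁻¹ i < σ⁻¹ j) ∧
    (∀ i j : Fin (c + e), c ≤ (i : ℕ) → c ≤ (j : ℕ) → i < j → σ⁻¹ i < σ⁻¹ j)

/-- the outer (concatenation) product `V^{⊗c} ⊗ V^{⊗e} → V^{⊗(c+e)}`, as a bilinear map -/
def outerL (c e : ℕ) : TPow K β c →ₗ[K] TPow K β e →ₗ[K] TPow K β (c + e) :=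
  Finsupp.lsum K fun k1 => LinearMap.toSpanSingleton K _
    (Finsupp.lsum K fun k2 => LinearMap.toSpanSingleton K _
      (Finsupp.single (Fin.append k1 k2) (1 : K)))

/-- the star product `w1 * w2 = Σ_σ (w1 ⊗ w2)^σ` over shortest coset representatives -/
def starL (p : β → Fin 3) (c e : ℕ) : TPow K β c →ₗ[K] TPow K β e →ₗ[K] TPow K β (c + e) :=
  ∑ σ ∈ shuffles c e, (outerL K c e).compr₂ (permAct K p σ)

/-- cast of a coordinate tensor power along an equality of tensor degrees -/
def castTPow {c d : ℕ} (h : c = d) : TPow K β c →ₗ[K] TPow K β d :=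
  Finsupp.lmapDomain K K (fun k => k ∘ (Fin.cast h.symm))

/-- embedding of coordinates along a map of basis index sets -/
def embTPow {γ : Type} (f : β → γ) (d : ℕ) : TPow K β d →ₗ[K] TPow K γ d :=
  Finsupp.lmapDomain K K (fun k => f ∘ k)

end

end Paper
namespace Paper

noncomputable section

variable (K : Type) [CommRing K]

/-- the index of the `q`-th position of the `p`-th block (blocks ordered via `ow`,
with sizes `c`) inside `Fin d`, `d = Σ c` -/
def blockIdx {ι : Type} [Fintype ι] [DecidableEq ι] (ow : ι → ℕ) (c : ι → ℕ) {d : ℕ}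
    (hd : ∑ p, c p = d) (p : ι) (q : Fin (c p)) : Fin d :=
  ⟨(∑ p' ∈ Finset.univ.filter (fun p' => ow p' < ow p), c p') + (q : ℕ), by
    have hq := q.2
    have hsub : (Finset.univ.filter (fun p' => ow p' < ow p)) ⊆ Finset.univ.erase p := by
      intro x hx
      rcases Finset.mem_filter.mp hx with ⟨_, hlt⟩
      exact Finset.mem_erase.mpr ⟨by intro hxp; rw [hxp] at hlt; exact lt_irrefl _ hlt, Finset.mem_univ x⟩
    have h1 : (∑ p' ∈ Finset.univ.filter (fun p' => ow p' < ow p), c p')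
        ≤ ∑ p' ∈ Finset.univ.erase p, c p' :=
      Finset.sum_le_sum_of_subset hsub
    have h2 := Finset.sum_erase_add Finset.univ c (Finset.mem_univ p)
    omega⟩

/-- iterated outer (concatenation) product of a finite family of tensors,
concatenated in the order given by `ow` -/
def bigOuter {β : Type} [Fintype β] [DecidableEq β] {ι : Type} [Fintype ι] [DecidableEq ι]
    (ow : ι → ℕ) (c : ι → ℕ) {d : ℕ}
    (hd : ∑ p, c p = d) (v : ∀ p : ι, TPow K β (c p)) : TPow K β d :=
  ∑ k : Fin d → β, (∏ p, (v p) (fun q => k (blockIdx ow c hd p q))) • Finsupp.single k (1 : K)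

end

end Paper
namespace Paper

noncomputable section

variable (K : Type) [CommRing K]

/-- bilinear extension of structure constants `f` to the spanned free modules -/
def pairExt {α β γ : Type} (f : α → β → (γ →₀ K)) (x : α →₀ K) (y : β →₀ K) : γ →₀ K :=
  x.sum fun a r => y.sum fun b s => (r * s) • f a b

/-- linear extension of a basis-valued map -/
def oneExt {α γ : Type} (f : α → (γ →₀ K)) (x : α →₀ K) : γ →₀ K :=
  x.sum fun a r => r • f a

variable {β : Type} [Fintype β] [DecidableEq β]

/-- the bilinear form on `β →₀ K` with Gram matrix `G` -/
def formV (G : β → β → K) : (β →₀ K) →ₗ[K] (β →₀ K) →ₗ[K] K :=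
  Finsupp.lsum K fun b => LinearMap.toSpanSingleton K _
    (Finsupp.lsum K fun b' => LinearMap.toSpanSingleton K K (G b b'))

/-- the induced (signed) bilinear form `(·,·)_d` on the `d`-th tensor power -/
def formD (p : β → Fin 3) (G : β → β → K) (d : ℕ) :
    TPow K β d →ₗ[K] TPow K β d →ₗ[K] K :=
  Finsupp.lsum K fun k => LinearMap.toSpanSingleton K _
    (Finsupp.lsum K fun k' => LinearMap.toSpanSingleton K K
      (((-1 : K) ^ koszul p p k k') * ∏ i, G (k i) (k' i)))

end

end Paper
open Classical

namespace Paper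

noncomputable section

/-! ## Combinatorics of multipartitions -/

section Comb

variable (ℓ n : ℕ)

/-- `I`-multicompositions with at most `n` parts, `I = {0,…,ℓ}` -/
abbrev MultiComp := Fin (ℓ+1) → Fin n → ℕ

variable {ℓ n}

def mcSize (μ : MultiComp ℓ n) : ℕ := ∑ i, ∑ r, μ i r

def IsMultiPartition (μ : MultiComp ℓ n) : Prop := ∀ i, Antitone (μ i)

def norms (μ : MultiComp ℓ n) : Fin (ℓ+1) → ℕ := fun i => ∑ r, μ i r

/-- dominance order on compositions -/
def Dominates (lam mu : Fin n → ℕ) : Prop :=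
  ∀ s : Fin n, ∑ r ∈ Finset.univ.filter (· ≤ s), lam r ≤ ∑ r ∈ Finset.univ.filter (· ≤ s), mu r

/-- the order `⊴_I` on `ℤ_{≥0}^I` determined by a partial order `po` on `I` -/
def domI (po : Fin (ℓ+1) → Fin (ℓ+1) → Prop) (a b : Fin (ℓ+1) → ℕ) : Prop :=
  ∀ i, ∑ j ∈ Finset.univ.filter (fun j => po i j), a j ≤
       ∑ j ∈ Finset.univ.filter (fun j => po i j), b j

/-- the order `≤_I` on multicompositions -/
def leI (po : Fin (ℓ+1) → Fin (ℓ+1) → Prop) (lam mu : MultiComp ℓ n) : Prop :=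
  (domI po (norms lam) (norms mu) ∧ norms lam ≠ norms mu) ∨
  (norms lam = norms mu ∧ ∀ i, Dominates (lam i) (mu i))

/-- `ι_i(λ)`: the multicomposition concentrated in component `i` -/
def iotaP (i : Fin (ℓ+1)) (lam : Fin n → ℕ) : MultiComp ℓ n :=
  fun i' => if i' = i then lam else 0

/-- the one-row partition `(m)` -/
def rowP (n m : ℕ) : Fin n → ℕ := fun r => if (r : ℕ) = 0 then m else 0

/-- the one-column partition `(1^m)` -/
def colP (n m : ℕ) : Fin n → ℕ := fun r => if (r : ℕ) < m then 1 else 0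

/-- the conjugate partition -/
def conjP (lam : Fin n → ℕ) : Fin n → ℕ :=
  fun c => (Finset.univ.filter fun r => (c : ℕ) < lam r).card

/-- reversal of the components of a multicomposition -/
def revM (μ : MultiComp ℓ n) : MultiComp ℓ n := fun i => μ i.rev

/-- componentwise conjugate of a multipartition -/
def conjM (μ : MultiComp ℓ n) : MultiComp ℓ n := fun i => conjP (μ i)

/-- componentwise sum of multicompositions -/
def addM (lam mu : MultiComp ℓ n) : MultiComp ℓ n := fun i r => lam i r + mu i r

end Comb

/-! ## Filling tuples (used to construct the idempotents `η_μ`) -/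

def cumSum (c : ℕ → ℕ) (m : ℕ) : ℕ := ∑ m' ∈ Finset.range (m+1), c m'

def fillIdx (c : ℕ → ℕ) (k : ℕ) : ℕ :=
  if h : ∃ m, k < cumSum c m then Nat.find h else 0

def mcFun {ℓ n : ℕ} (μ : MultiComp ℓ n) : ℕ → ℕ := fun m =>
  if h : m < (ℓ+1) * n then
    μ (finProdFinEquiv.symm (⟨m, h⟩ : Fin ((ℓ+1) * n))).1
      (finProdFinEquiv.symm (⟨m, h⟩ : Fin ((ℓ+1) * n))).2
  else 0

def decodeIdx {ℓ n : ℕ} [NeZero n] (m : ℕ) : Fin (ℓ+1) × Fin n :=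
  if h : m < (ℓ+1) * n then finProdFinEquiv.symm ⟨m, h⟩ else ((0 : Fin (ℓ+1)), ⟨0, Nat.pos_of_ne_zero (NeZero.ne n)⟩)

/-- a tuple realizing the multicomposition `μ`, listing the pairs `(i,r)` with
multiplicities `μ i r` in the lexicographic order -/
def etaTuple {ℓ n : ℕ} [NeZero n] (μ : MultiComp ℓ n) (d : ℕ) :
    Fin d → Fin (ℓ+1) × Fin n :=
  fun k => decodeIdx (fillIdx (mcFun μ) k)

/-! ## Generalized Schur algebras presented by a calibrated basis with idempotents -/

/-- The data of a superalgebra `A` over `F` presented by a finite calibrated basis `βA`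
(with `part = 0/1/2` for `𝔞/𝔠/odd`), structure constants `mulA`, distinguished
standard idempotent basis elements `eA i` for `i ∈ I = {0,…,ℓ}`, and a partial
order `po` on `I` (refining nothing in particular here). -/
structure SchurAlgData (F : Type) [CommRing F] (ℓ : ℕ) : Type 1 where
  βA : Type
  finA : Fintype βA
  deqA : DecidableEq βA
  pA : βA → Fin 3
  ordA : βA → ℕ
  mulA : βA → βA → (βA →₀ F)
  eA : Fin (ℓ+1) → βA
  po : Fin (ℓ+1) → Fin (ℓ+1) → Prop

attribute [instance] SchurAlgData.finA SchurAlgData.deqA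

namespace SchurAlgData

variable {F : Type} [CommRing F] {ℓ : ℕ} (S : SchurAlgData F ℓ) (n d : ℕ)

/-- the basis of the matrix superalgebra `M_n(A)` -/
abbrev MBt := S.βA × Fin n × Fin n

def pM : S.MBt n → Fin 3 := fun m => S.pA m.1

def ordM : S.MBt n → ℕ := fun m => (S.ordA m.1 * n + (m.2.1 : ℕ)) * n + (m.2.2 : ℕ)

/-- structure constants of `M_n(A)`: `ξ^b_{rs} ξ^{b'}_{r's'} = δ_{s,r'} (b b')_{r,s'}` -/
def mulM : S.MBt n → S.MBt n → (S.MBt n →₀ F) := fun x y =>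
  if x.2.2 = y.2.1 then Finsupp.mapDomain (fun c => (c, x.2.1, y.2.2)) (S.mulA x.1 y.1)
  else 0

/-- the generalized Schur algebra `T^A(n,d) = Γ̃^d M_n(A)`, in coordinates -/
def alg : Submodule F (TPow F (S.MBt n) d) :=
  gammaTilde F (stdFam F (S.pM n) (S.ordM n)) d

/-- left multiplication by `x` in (the ambient space of) `T^A(n,d)` -/
def amul (x : TPow F (S.MBt n) d) : TPow F (S.MBt n) d →ₗ[F] TPow F (S.MBt n) d :=
  kact F (S.pM n) (S.pM n) (fun a b => S.mulM n a b) x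

/-- right multiplication by `x` (with the appropriate Koszul signs) -/
def ramul (x : TPow F (S.MBt n) d) : TPow F (S.MBt n) d →ₗ[F] TPow F (S.MBt n) d :=
  rkact F (S.pM n) (S.pM n) (fun b a => S.mulM n b a) x

/-- the set of even elements of the ambient space of `T^A(n,d)` -/
def evA : Set (TPow F (S.MBt n) d) := (evenPart F (S.pM n) d : Set _)

/-- the set of odd elements -/
def odA : Set (TPow F (S.MBt n) d) := (oddPart F (S.pM n) d : Set _)

/-- the idempotent `η_μ = η^{e_0}_{μ^{(0)}} * ⋯ * η^{e_ℓ}_{μ^{(ℓ)}} ∈ T^A(n,d)` -/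
def eta [NeZero n] (μ : MultiComp ℓ n) : TPow F (S.MBt n) d :=
  (stdFam F (S.pM n) (S.ordM n)).y
    (fun k => (S.eA (etaTuple μ d k).1, (etaTuple μ d k).2, (etaTuple μ d k).2))

def lStable (N : Submodule F (TPow F (S.MBt n) d)) : Prop :=
  ∀ x ∈ S.alg n d, ∀ v ∈ N, S.amul n d x v ∈ N

def rStable (N : Submodule F (TPow F (S.MBt n) d)) : Prop :=
  ∀ x ∈ S.alg n d, ∀ v ∈ N, S.ramul n d x v ∈ N

/-- the left ideal of `T^A(n,d)` generated by a set -/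
def lIdeal (T : Set (TPow F (S.MBt n) d)) : Submodule F (TPow F (S.MBt n) d) :=
  sInf {N | T ⊆ N ∧ S.lStable n d N}

/-- the right ideal generated by a set -/
def rIdeal (T : Set (TPow F (S.MBt n) d)) : Submodule F (TPow F (S.MBt n) d) :=
  sInf {N | T ⊆ N ∧ S.rStable n d N}

/-- the two-sided ideal generated by a set -/
def tIdeal (T : Set (TPow F (S.MBt n) d)) : Submodule F (TPow F (S.MBt n) d) :=
  sInf {N | T ⊆ N ∧ S.lStable n d N ∧ S.rStable n d N}

/-- the idempotents `η_μ` for multipartitions `μ >_I λ` -/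
def hiSet [NeZero n] (lam : MultiComp ℓ n) : Set (TPow F (S.MBt n) d) :=
  {w | ∃ μ : MultiComp ℓ n, mcSize μ = d ∧ IsMultiPartition μ ∧
        leI S.po lam μ ∧ μ ≠ lam ∧ w = S.eta n d μ}

/-- the two-sided ideal `T^A(n,d)^{> λ}` -/
def idealHi [NeZero n] (lam : MultiComp ℓ n) : Submodule F (TPow F (S.MBt n) d) :=
  S.tIdeal n d (S.hiSet n d lam)

/-- the standard module `Δ(λ)` is the subquotient `D1 λ / D2 λ` of the regular module -/
def D1 [NeZero n] (lam : MultiComp ℓ n) : Submodule F (TPow F (S.MBt n) d) :=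
  S.lIdeal n d {S.eta n d lam}

def D2 [NeZero n] (lam : MultiComp ℓ n) : Submodule F (TPow F (S.MBt n) d) :=
  S.D1 n d lam ⊓ S.idealHi n d lam

/-- the right standard module `Δ^op(λ)` is the subquotient `R1 λ / R2 λ` -/
def R1 [NeZero n] (lam : MultiComp ℓ n) : Submodule F (TPow F (S.MBt n) d) :=
  S.rIdeal n d {S.eta n d lam}

def R2 [NeZero n] (lam : MultiComp ℓ n) : Submodule F (TPow F (S.MBt n) d) :=
  S.R1 n d lam ⊓ S.idealHi n d lam

end SchurAlgData

/-! ## Relational isomorphisms of subquotient supermodules -/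

/-- `SubQuotIso Ta evA odA aM aN evM odM evN odN Phi Plo Qhi Qlo ε` says that the
subquotient `Phi/Plo` (of an ambient module `M` on which the algebra elements act via
`aM`) is isomorphic, via a supermodule isomorphism of parity `ε`, to the subquotient
`Qhi/Qlo` (with action `aN`). Over a field, an isomorphism of subquotients is always
induced by an ambient linear map, which is how it is encoded here. -/
def SubQuotIso {F : Type} [CommRing F] {A M N : Type}
    [AddCommGroup M] [Module F M] [AddCommGroup N] [Module F N]
    (Ta evA odA : Set A) (aM : A → M →ₗ[F] M) (aN : A → N →ₗ[F] N)
    (evM odM : Set M) (evN odN : Set N)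
    (Phi Plo : Submodule F M) (Qhi Qlo : Submodule F N) (ε : Bool) : Prop :=
  Plo ≤ Phi ∧ Qlo ≤ Qhi ∧
  ∃ f : M →ₗ[F] N,
    (∀ v ∈ Phi, f v ∈ Qhi) ∧ (∀ v ∈ Plo, f v ∈ Qlo) ∧
    (∀ w ∈ Qhi, ∃ v ∈ Phi, f v - w ∈ Qlo) ∧
    (∀ v ∈ Phi, f v ∈ Qlo → v ∈ Plo) ∧
    (∀ x ∈ Ta ∩ evA, ∀ v ∈ Phi, f (aM x v) - aN x (f v) ∈ Qlo) ∧
    (∀ x ∈ Ta ∩ odA, ∀ v ∈ Phi,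
       f (aM x v) - (if ε then (-1 : F) else 1) • aN x (f v) ∈ Qlo) ∧
    (∀ v ∈ Phi, v ∈ evM → ∃ w ∈ (if ε then odN else evN), f v - w ∈ Qlo) ∧
    (∀ v ∈ Phi, v ∈ odM → ∃ w ∈ (if ε then evN else odN), f v - w ∈ Qlo)

/-! ## Supermodules over `T^A(n,d)`, filtrations and tilting modules -/

/-- a supermodule over `T^A(n,d)` presented in coordinates: a basis `βV` with
parities `pV` and the structure constants `actV` of the action of `M_n(A)` -/
structure ModSetting {F : Type} [CommRing F] {ℓ : ℕ} (S : SchurAlgData F ℓ) (n : ℕ) :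
    Type 1 where
  βV : Type
  finV : Fintype βV
  deqV : DecidableEq βV
  pV : βV → Fin 3
  actV : S.MBt n → βV → (βV →₀ F)

attribute [instance] ModSetting.finV ModSetting.deqV

namespace ModSetting

variable {F : Type} [CommRing F] {ℓ : ℕ} {S : SchurAlgData F ℓ} {n : ℕ}
variable (MS : ModSetting S n) (d : ℕ)

/-- the action of elements of (the ambient space of) `T^A(n,d)` -/
def act (x : TPow F (S.MBt n) d) : TPow F MS.βV d →ₗ[F] TPow F MS.βV d :=
  kact F (S.pM n) MS.pV MS.actV x

def evM : Set (TPow F MS.βV d) := (evenPart F MS.pV d : Set _)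

def odM : Set (TPow F MS.βV d) := (oddPart F MS.pV d : Set _)

def stable (N : Submodule F (TPow F MS.βV d)) : Prop :=
  ∀ x ∈ S.alg n d, ∀ v ∈ N, MS.act d x v ∈ N

/-- the factor `Whi/Wlo` is isomorphic (as a supermodule, up to parity shift)
to the standard module `Δ(λ)` -/
def stdFactorAt [NeZero n] (Whi Wlo : Submodule F (TPow F MS.βV d))
    (lam : MultiComp ℓ n) : Prop :=
  ∃ ε : Bool,
    SubQuotIso (S.alg n d : Set _) (S.evA n d) (S.odA n d)
      (MS.act d) (fun x => S.amul n d x)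
      (MS.evM d) (MS.odM d) (S.evA n d) (S.odA n d)
      Whi Wlo (S.D1 n d lam) (S.D2 n d lam) ε

/-- the factor `Whi/Wlo` is isomorphic (as a supermodule, up to parity shift) to the
costandard module `∇(λ) = (Δ^op(λ))^*`; this is encoded by a perfect contravariant
pairing with the right standard module `Δ^op(λ) = R1 λ / R2 λ`. -/
def nablaFactorAt [NeZero n] (Whi Wlo : Submodule F (TPow F MS.βV d))
    (lam : MultiComp ℓ n) : Prop :=
  ∃ ε : Bool, ∃ B : TPow F MS.βV d →ₗ[F] TPow F (S.MBt n) d →ₗ[F] F,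
    (∀ v ∈ Wlo, ∀ w ∈ S.R1 n d lam, B v w = 0) ∧
    (∀ v ∈ Whi, ∀ w ∈ S.R2 n d lam, B v w = 0) ∧
    (∀ v ∈ Whi, (∀ w ∈ S.R1 n d lam, B v w = 0) → v ∈ Wlo) ∧
    (∀ w ∈ S.R1 n d lam, (∀ v ∈ Whi, B v w = 0) → w ∈ S.R2 n d lam) ∧
    (∀ v ∈ Whi, ∀ pv : Bool, v ∈ (if pv then MS.odM d else MS.evM d) →
      ∀ w ∈ S.R1 n d lam, ∀ pw : Bool, w ∈ (if pw then S.odA n d else S.evA n d) →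
        ((pv != pw) ≠ ε → B v w = 0)) ∧
    (∀ x ∈ (S.alg n d : Set _), ∀ px : Bool, x ∈ (if px then S.odA n d else S.evA n d) →
      ∀ v ∈ Whi, ∀ pv : Bool, v ∈ (if pv then MS.odM d else MS.evM d) →
      ∀ w ∈ S.R1 n d lam, ∀ pw : Bool, w ∈ (if pw then S.odA n d else S.evA n d) →
        B (MS.act d x v) w =
          (if px && (pv != pw) then (-1 : F) else 1) * B v (S.ramul n d x w))

/-- a standard filtration of `hi/lo` with all factors of the form `Δ(λ)`, `λ ∈ allowed` -/
def IsStdFiltBy [NeZero n] (lo hi : Submodule F (TPow F MS.βV d))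
    (allowed : Set (MultiComp ℓ n)) : Prop :=
  ∃ L : ℕ, ∃ W : Fin (L+1) → Submodule F (TPow F MS.βV d),
    Monotone W ∧ W 0 = lo ∧ W (Fin.last L) = hi ∧
    (∀ r, MS.stable d (W r)) ∧
    ∀ r : Fin L, ∃ lam, lam ∈ allowed ∧ mcSize lam = d ∧ IsMultiPartition lam ∧
      MS.stdFactorAt d (W r.succ) (W r.castSucc) lam

/-- a costandard filtration of `hi/lo` -/
def IsCoStdFilt [NeZero n] (lo hi : Submodule F (TPow F MS.βV d)) : Prop :=
  ∃ L : ℕ, ∃ W : Fin (L+1) → Submodule F (TPow F MS.βV d),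
    Monotone W ∧ W 0 = lo ∧ W (Fin.last L) = hi ∧
    (∀ r, MS.stable d (W r)) ∧
    ∀ r : Fin L, ∃ lam : MultiComp ℓ n, mcSize lam = d ∧ IsMultiPartition lam ∧
      MS.nablaFactorAt d (W r.succ) (W r.castSucc) lam

/-- tilting supermodule: admits both a standard and a costandard filtration -/
def IsTilting [NeZero n] (V : Submodule F (TPow F MS.βV d)) : Prop :=
  MS.IsStdFiltBy d ⊥ V Set.univ ∧ MS.IsCoStdFilt d ⊥ V

/-- indecomposability (as a supermodule) -/
def Indec (V : Submodule F (TPow F MS.βV d)) : Prop :=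
  ¬ ∃ U U' : Submodule F (TPow F MS.βV d),
      MS.stable d U ∧ MS.stable d U' ∧ U ⊓ U' = ⊥ ∧ U ⊔ U' = V ∧ U ≠ ⊥ ∧ U' ≠ ⊥

/-- `V` is (a copy of) the indecomposable tilting supermodule `T(λ)`:
it is tilting, indecomposable, contains a copy of `Δ(λ)` such that the quotient has
a standard filtration with factors `Δ(μ)`, `μ < λ`. -/
def IsIndecTilting [NeZero n] (lam : MultiComp ℓ n)
    (V : Submodule F (TPow F MS.βV d)) : Prop :=
  MS.IsTilting d V ∧ MS.Indec d V ∧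
  ∃ U : Submodule F (TPow F MS.βV d), U ≤ V ∧ MS.stable d U ∧
    MS.stdFactorAt d U ⊥ lam ∧
    MS.IsStdFiltBy d U V {μ | leI S.po μ lam ∧ μ ≠ lam}

/-- full tilting supermodule: tilting, and every indecomposable tilting supermodule
`T(λ)` occurs as a direct summand -/
def IsFullTilting [NeZero n] (V : Submodule F (TPow F MS.βV d)) : Prop :=
  MS.IsTilting d V ∧
  ∀ lam : MultiComp ℓ n, mcSize lam = d → IsMultiPartition lam →
    ∃ U U' : Submodule F (TPow F MS.βV d),
      MS.stable d U ∧ MS.stable d U' ∧ U ⊓ U' = ⊥ ∧ U ⊔ U' = V ∧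
      MS.IsIndecTilting d lam U

end ModSetting

end

end Paper
namespace Paper

noncomputable section

/-! ## The extended zigzag algebra -/

variable (F : Type) [CommRing F] (ℓ : ℕ)

/-- the basis of the extended zigzag algebra `Z`:
`e i` (`i ∈ I`), `a_{j,j+1}`, `a_{j+1,j}`, `c j` (`j ∈ J`) -/
abbrev ZB := Fin (ℓ+1) ⊕ (Fin ℓ ⊕ (Fin ℓ ⊕ Fin ℓ))

variable {ℓ}

def eZ (i : Fin (ℓ+1)) : ZB ℓ := Sum.inl i
/-- the arrow `a_{j,j+1}` (target `j`, source `j+1`) -/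
def dZ (j : Fin ℓ) : ZB ℓ := Sum.inr (Sum.inl j)
/-- the arrow `a_{j+1,j}` (target `j+1`, source `j`) -/
def uZ (j : Fin ℓ) : ZB ℓ := Sum.inr (Sum.inr (Sum.inl j))
/-- the cycle `c_j = a_{j,j+1} a_{j+1,j}` -/
def cZ (j : Fin ℓ) : ZB ℓ := Sum.inr (Sum.inr (Sum.inr j))

def srcZ : ZB ℓ → Fin (ℓ+1)
  | Sum.inl i => i
  | Sum.inr (Sum.inl j) => j.succ
  | Sum.inr (Sum.inr (Sum.inl j)) => j.castSucc
  | Sum.inr (Sum.inr (Sum.inr j)) => j.castSucc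

def tgtZ : ZB ℓ → Fin (ℓ+1)
  | Sum.inl i => i
  | Sum.inr (Sum.inl j) => j.castSucc
  | Sum.inr (Sum.inr (Sum.inl j)) => j.succ
  | Sum.inr (Sum.inr (Sum.inr j)) => j.castSucc

/-- calibration of `Z`: `𝔞 = span(e_i)`, `𝔠 = span(c_j)`, odd part spanned by arrows -/
def pZ : ZB ℓ → Fin 3
  | Sum.inl _ => 0
  | Sum.inr (Sum.inr (Sum.inr _)) => 1
  | _ => 2

def ordZ : ZB ℓ → ℕ
  | Sum.inl i => (i : ℕ)
  | Sum.inr (Sum.inl j) => (ℓ+1) + (j : ℕ)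
  | Sum.inr (Sum.inr (Sum.inl j)) => (ℓ+1) + ℓ + (j : ℕ)
  | Sum.inr (Sum.inr (Sum.inr j)) => (ℓ+1) + 2*ℓ + (j : ℕ)

/-- structure constants of the extended zigzag algebra -/
def mulZ : ZB ℓ → ZB ℓ → (ZB ℓ →₀ F) := fun b b' =>
  if srcZ b = tgtZ b' then
    match b, b' with
    | Sum.inl _, y => Finsupp.single y 1
    | y, Sum.inl _ => Finsupp.single y 1
    | Sum.inr (Sum.inl j), Sum.inr (Sum.inr (Sum.inl _)) => Finsupp.single (cZ j) 1
    | Sum.inr (Sum.inr (Sum.inl j)), Sum.inr (Sum.inl _) =>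
        if h : (j : ℕ) + 1 < ℓ then Finsupp.single (cZ ⟨(j:ℕ)+1, h⟩) 1 else 0
    | _, _ => 0
  else 0

variable (ℓ) in
/-- the extended zigzag algebra, packaged as the data of a generalized Schur algebra;
the heredity order on `I = {0,…,ℓ}` is the natural total order -/
def zigData : SchurAlgData F ℓ :=
  ⟨ZB ℓ, inferInstance, inferInstance, pZ, ordZ, mulZ F, eZ, fun i j => i ≤ j⟩

/-! ## The full tilting `Z`-supermodule `𝖳` -/

variable (ℓ) in
/-- basis of `𝖳 = ΠL(0) ⊕ ⊕_{j ∈ J} Z e_j`: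
`u0` spans `Π𝖳(0) = ΠL(0)`; `Et j = e_j`, `Ct j = c_j`, `Ut j = a_{j+1,j}` and
`Dt t = a_{t,t+1}` (the latter lying in `Z e_{t+1}`) are the basis elements of the
left ideals `Z e_j = Π𝖳(j+1)`. -/
abbrev TB := Unit ⊕ (Fin ℓ ⊕ (Fin ℓ ⊕ (Fin ℓ ⊕ {t : Fin ℓ // (t : ℕ) + 1 < ℓ})))

def u0 : TB ℓ := Sum.inl ()
def Et (j : Fin ℓ) : TB ℓ := Sum.inr (Sum.inl j)
def Ct (j : Fin ℓ) : TB ℓ := Sum.inr (Sum.inr (Sum.inl j))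
def Ut (j : Fin ℓ) : TB ℓ := Sum.inr (Sum.inr (Sum.inr (Sum.inl j)))
def Dt (t : Fin ℓ) (h : (t : ℕ) + 1 < ℓ) : TB ℓ := Sum.inr (Sum.inr (Sum.inr (Sum.inr ⟨t, h⟩)))

/-- `compT x = i` when the basis vector `x` lies in the summand `Π𝖳(i)` of `𝖳` -/
def compT : TB ℓ → Fin (ℓ+1)
  | Sum.inl _ => 0
  | Sum.inr (Sum.inl j) => j.succ
  | Sum.inr (Sum.inr (Sum.inl j)) => j.succ
  | Sum.inr (Sum.inr (Sum.inr (Sum.inl j))) => j.succ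
  | Sum.inr (Sum.inr (Sum.inr (Sum.inr t))) => ⟨(t.1 : ℕ) + 2, by have := t.2; omega⟩

/-- calibration of `𝖳`: `𝖳_𝔞 = span(e_j)`, `𝖳_𝔠 = span(c_j)`,
odd part spanned by `u0` and the arrows -/
def pT : TB ℓ → Fin 3
  | Sum.inl _ => 2
  | Sum.inr (Sum.inl _) => 0
  | Sum.inr (Sum.inr (Sum.inl _)) => 1
  | Sum.inr (Sum.inr (Sum.inr _)) => 2

def ordT : TB ℓ → ℕ
  | Sum.inl _ => 0
  | Sum.inr (Sum.inl j) => 1 + (j : ℕ)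
  | Sum.inr (Sum.inr (Sum.inl j)) => 1 + ℓ + (j : ℕ)
  | Sum.inr (Sum.inr (Sum.inr (Sum.inl j))) => 1 + 2*ℓ + (j : ℕ)
  | Sum.inr (Sum.inr (Sum.inr (Sum.inr t))) => 1 + 3*ℓ + (t.1 : ℕ)

/-- underlying element of `Z` of a non-`u0` basis vector of `𝖳` -/
def toZ : TB ℓ → Option (ZB ℓ)
  | Sum.inl _ => none
  | Sum.inr (Sum.inl j) => some (eZ j.castSucc)
  | Sum.inr (Sum.inr (Sum.inl j)) => some (cZ j)
  | Sum.inr (Sum.inr (Sum.inr (Sum.inl j))) => some (uZ j)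
  | Sum.inr (Sum.inr (Sum.inr (Sum.inr t))) => some (dZ t.1)

/-- encoding of elements of the left ideals `Z e_j` (`j ∈ J`) back into `TB` -/
def encB : ZB ℓ → Option (TB ℓ)
  | Sum.inl i => if h : (i : ℕ) < ℓ then some (Et ⟨i, h⟩) else none
  | Sum.inr (Sum.inl t) => if h : (t : ℕ) + 1 < ℓ then some (Dt t h) else none
  | Sum.inr (Sum.inr (Sum.inl j)) => some (Ut j)
  | Sum.inr (Sum.inr (Sum.inr j)) => some (Ct j)

def pushEnc (f : ZB ℓ →₀ F) : TB ℓ →₀ F :=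
  f.sum fun b r =>
    match encB b with
    | Option.some t => Finsupp.single t r
    | Option.none => 0

/-- structure constants of the left `Z`-action on `𝖳` -/
def actT : ZB ℓ → TB ℓ → (TB ℓ →₀ F) := fun z t =>
  match toZ t with
  | Option.none => if z = eZ (0 : Fin (ℓ+1)) then Finsupp.single u0 1 else 0
  | Option.some zb => pushEnc F (mulZ F z zb)

/-- structure constants of the right action on `𝖳` of the Ringel dual `Z' ≅ Z`
(the basis of `Z'` being identified with `ZB` via `e_i ↦ e'_i`, `a ↦ a'`, `c ↦ c'`) -/
def ractT : TB ℓ → ZB ℓ → (TB ℓ →₀ F) := fun t z =>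
  match z with
  | Sum.inl i =>
      match t with
      | Sum.inl _ => if (i : ℕ) = ℓ then Finsupp.single u0 1 else 0
      | t' =>
          match toZ t' with
          | Option.some zb => if (i : ℕ) + (srcZ zb : ℕ) + 1 = ℓ then Finsupp.single t' 1 else 0
          | Option.none => 0
  | Sum.inr (Sum.inr (Sum.inr i)) =>  -- c'_i
      match t with
      | Sum.inr (Sum.inl j) => if (i : ℕ) + (j : ℕ) + 1 = ℓ then Finsupp.single (Ct j) 1 else 0
      | _ => 0
  | Sum.inr (Sum.inr (Sum.inl i)) =>  -- a'_{i+1,i} (resp. a'_{ℓ,ℓ-1} for i = ℓ-1)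
      match t with
      | Sum.inl _ => if h : (i : ℕ) + 1 = ℓ then -(Finsupp.single (Ct ⟨0, by omega⟩) (1 : F)) else 0
      | Sum.inr (Sum.inl p) =>
          if h : (i : ℕ) + (p : ℕ) + 2 = ℓ then Finsupp.single (Dt p (by omega)) 1 else 0
      | Sum.inr (Sum.inr (Sum.inr (Sum.inl p))) =>
          if h : (i : ℕ) + (p : ℕ) + 2 = ℓ then Finsupp.single (Ct ⟨(p : ℕ) + 1, by omega⟩) 1 else 0
      | _ => 0
  | Sum.inr (Sum.inl i) =>  -- a'_{i,i+1} (resp. a'_{ℓ-1,ℓ} for i = ℓ-1)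
      match t with
      | Sum.inr (Sum.inl q) =>
          if h : (i : ℕ) + (q : ℕ) + 1 = ℓ then
            (if h0 : (q : ℕ) = 0 then Finsupp.single u0 1
             else Finsupp.single (Ut ⟨(q : ℕ) - 1, by omega⟩) 1)
          else 0
      | Sum.inr (Sum.inr (Sum.inr (Sum.inr tt))) =>
          if (i : ℕ) + (tt.1 : ℕ) + 2 = ℓ then Finsupp.single (Ct tt.1) 1 else 0
      | _ => 0

/-! ## `M_n(𝖳)` and the bisupermodule `𝒯` -/

variable (ℓ) in
/-- the basis of `M_n(𝖳)` -/
abbrev MTB (n : ℕ) := TB ℓ × Fin n × Fin n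

def pMT {n : ℕ} : MTB ℓ n → Fin 3 := fun m => pT m.1

def ordMT {n : ℕ} : MTB ℓ n → ℕ := fun m => (ordT m.1 * n + (m.2.1 : ℕ)) * n + (m.2.2 : ℕ)

/-- the left action of the basis of `M_n(Z)` on the basis of `M_n(𝖳)` -/
def lactMT {n : ℕ} : (zigData F ℓ).MBt n → MTB ℓ n → (MTB ℓ n →₀ F) := fun x m =>
  if x.2.2 = m.2.1 then Finsupp.mapDomain (fun t => (t, x.2.1, m.2.2)) (actT F x.1 m.1) else 0

/-- the right action of the basis of `M_n(Z')` on the basis of `M_n(𝖳)` -/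
def rmtT {n : ℕ} : MTB ℓ n → (zigData F ℓ).MBt n → (MTB ℓ n →₀ F) := fun m x =>
  if m.2.2 = x.2.1 then Finsupp.mapDomain (fun t => (t, m.2.1, x.2.2)) (ractT F m.1 x.1) else 0

/-- the left action on the column module `Col_n(𝖳)` -/
def lactCol {n : ℕ} : (zigData F ℓ).MBt n → (TB ℓ × Fin n) → ((TB ℓ × Fin n) →₀ F) := fun x c =>
  if x.2.2 = c.2 then Finsupp.mapDomain (fun t => (t, x.2.1)) (actT F x.1 c.1) else 0

variable (ℓ) in
/-- `M_n(𝖳)` as a supermodule over `T^Z(n,d)`, in coordinates -/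
def fullMS (n : ℕ) : ModSetting (zigData F ℓ) n :=
  ⟨MTB ℓ n, inferInstance, inferInstance, pMT, lactMT F⟩

variable (ℓ) in
/-- `Col_n(𝖳)` as a supermodule over `T^Z(n,d)`, in coordinates -/
def colMS (n : ℕ) : ModSetting (zigData F ℓ) n :=
  ⟨TB ℓ × Fin n, inferInstance, inferInstance, fun c => pT c.1, lactCol F⟩

variable (ℓ) in
/-- the `(T^Z(n,d), T^{Z'}(n,d))`-bisupermodule `𝒯 = Γ̃^d M_n(𝖳)` (over `F`) -/
def scrT (n d : ℕ) : Submodule F (TPow F (MTB ℓ n) d) :=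
  gammaTilde F (stdFam F pMT ordMT) d

variable (ℓ) in
/-- the right action of (the ambient space of) `T^{Z'}(n,d)` on the ambient space of `𝒯` -/
def rActT (n d : ℕ) (x : TPow F ((zigData F ℓ).MBt n) d) :
    TPow F (MTB ℓ n) d →ₗ[F] TPow F (MTB ℓ n) d :=
  rkact F ((zigData F ℓ).pM n) pMT (rmtT F) x

variable (ℓ) in
/-- the calibrated family presenting `Col_n(Π𝖳(i))` inside `Col_n(𝖳)` -/
def colFam (n : ℕ) (i : Fin (ℓ+1)) : CalFamily F (TB ℓ × Fin n) :=
  ⟨{x : TB ℓ × Fin n // compT x.1 = i}, inferInstance, inferInstance,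
   fun x => pT x.1.1, fun x => ordT x.1.1 * n + (x.1.2 : ℕ), fun x => Finsupp.single x.1 1⟩

variable (ℓ) in
/-- the tilting supermodule `𝒯^d_i = Γ̃^d Col_n(Π𝖳(i))` over `T^Z(n,d)` -/
def scrTi (n d : ℕ) (i : Fin (ℓ+1)) : Submodule F (TPow F (TB ℓ × Fin n) d) :=
  gammaTilde F (colFam F ℓ n i) d

end

end Paper
namespace Paper

/-!
Faithfulness holds already on the whole ambient tensor power, by test vectors. For every basis
element `z` of `Z` there are basis vectors `t, o` of `𝖳` such that `z` is the only basis element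
of `Z` for which `z · t` has a nonzero `o`-coefficient; likewise for the right action of `Z'`.
Given a basis tuple `a` of `M_n(Z)^{⊗d}`, place the test vector of `a i` in column `i` (possible
since `d ≤ n`). The resulting tuple `k` has distinct entries, so `y_k ∈ 𝒯` is a signed sum over
the orbit of `k`, and the coefficient of `x · y_k` at the matching output tuple is the coefficient
of `a` in `x` times a nonzero scalar: the distinct columns kill every permuted term, and detection
kills every other basis tuple occurring in `x`.
-/

section SignedTensorAction

variable {K : Type} [Field K] {α β : Type} {d : ℕ}

namespace CalFamily

variable (Fam : CalFamily K β)

theorem mfac_eq_one_of_injective {b : Fin d → Fam.ι} (hb : Function.Injective b) :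
    Fam.mfac b = 1 := by
  refine Finset.prod_eq_one fun c _ => ?_
  have hcard : (Finset.univ.filter fun i : Fin d => b i = c).card ≤ 1 :=
    Finset.card_le_one.mpr fun i hi j hj =>
      hb ((Finset.mem_filter.mp hi).2.trans (Finset.mem_filter.mp hj).2.symm)
  interval_cases (Finset.univ.filter fun i : Fin d => b i = c).card <;> rfl

theorem mem_orbit_self (b : Fin d → Fam.ι) : b ∈ Fam.orbit b :=
  Finset.mem_filter.mpr ⟨Finset.mem_univ _, 1, rfl⟩

theorem isSeq_of_injective {b : Fin d → Fam.ι} (hb : Function.Injective b) : Fam.IsSeq b :=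
  fun _ _ hij heq => absurd (hb heq) hij

theorem y_mem_gammaTilde {b : Fin d → Fam.ι} (hb : Fam.IsSeq b) : Fam.y b ∈ gammaTilde K Fam d :=
  Submodule.subset_span ⟨b, hb, rfl⟩

end CalFamily

theorem tensorOf_apply (v : Fin d → (β →₀ K)) (m : Fin d → β) :
    tensorOf K v m = ∏ i, v i (m i) := by
  unfold tensorOf
  rw [Finsupp.finsetSum_apply]
  by_cases hm : ∀ i, m i ∈ (v i).support
  · rw [Finset.sum_eq_single m (fun k _ hkm => by simp [hkm])
      (fun hmem => absurd (Fintype.mem_piFinset.mpr hm) hmem)]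
    simp
  · push Not at hm
    obtain ⟨i, hi⟩ := hm
    have hvi : v i (m i) = 0 := Finsupp.notMem_support_iff.mp hi
    rw [Finset.prod_eq_zero (Finset.mem_univ i) hvi]
    refine Finset.sum_eq_zero fun k hk => ?_
    have hne : k ≠ m := by
      rintro rfl
      exact hi (Fintype.mem_piFinset.mp hk i)
    simp [hne]

theorem tensorOf_single (b : Fin d → β) :
    tensorOf K (fun i => Finsupp.single (b i) (1 : K)) = Finsupp.single b 1 := by
  ext m
  rw [tensorOf_apply]
  rcases eq_or_ne b m with rfl | h
  · simp
  · obtain ⟨i, hi⟩ := Function.ne_iff.mp h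
    rw [Finsupp.single_apply, if_neg h]
    exact Finset.prod_eq_zero (Finset.mem_univ i) (by simp [hi])

theorem CalFamily.y_eq_sum_single_of_injective (Fam : CalFamily K β) (e : Fam.ι → β)
    (hvec : ∀ c, Fam.vec c = Finsupp.single (e c) 1) {b : Fin d → Fam.ι}
    (hb : Function.Injective b) :
    Fam.y b = ∑ b' ∈ Fam.orbit b,
      ((-1 : K) ^ (Fam.inversions b + Fam.inversions b')) • Finsupp.single (e ∘ b') 1 := by
  simp only [CalFamily.y, Fam.mfac_eq_one_of_injective hb, one_nsmul, CalFamily.x, hvec]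
  exact Finset.sum_congr rfl fun b' _ => congrArg _ (tensorOf_single (e ∘ b'))

/-- `kact` and `rkact` are definitionally of this form. -/
noncomputable def signedTensorAct (sgn : (Fin d → α) → (Fin d → β) → ℕ) (ent : α → β → (β →₀ K))
    (x : TPow K α d) : TPow K β d →ₗ[K] TPow K β d :=
  Finsupp.lsum K fun k => LinearMap.toSpanSingleton K _
    (x.sum fun a r => (r * (-1 : K) ^ sgn a k) • tensorOf K fun i => ent (a i) (k i))

variable {sgn : (Fin d → α) → (Fin d → β) → ℕ} {ent : α → β → (β →₀ K)} {x : TPow K α d}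

theorem signedTensorAct_single_apply (k m : Fin d → β) :
    signedTensorAct sgn ent x (Finsupp.single k 1) m =
      x.sum fun a r => r * (-1 : K) ^ sgn a k * ∏ i, ent (a i) (k i) (m i) := by
  simp only [signedTensorAct, Finsupp.lsum_single, LinearMap.toSpanSingleton_apply, one_smul,
    Finsupp.sum_apply, Finsupp.smul_apply, tensorOf_apply, smul_eq_mul]

def Detects (ent : α → β → (β →₀ K)) (a : α) (t o : β) : Prop :=
  ∀ a', ent a' t o ≠ 0 ↔ a' = a

theorem signedTensorAct_single_apply_of_detects {k m : Fin d → β} {a : Fin d → α}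
    (hdet : ∀ i, Detects ent (a i) (k i) (m i)) :
    signedTensorAct sgn ent x (Finsupp.single k 1) m =
      x a * ((-1 : K) ^ sgn a k * ∏ i, ent (a i) (k i) (m i)) := by
  rw [signedTensorAct_single_apply, Finsupp.sum]
  refine (Finset.sum_eq_single a (fun a' _ hne => ?_) (fun ha => ?_)).trans (mul_assoc _ _ _)
  · obtain ⟨i, hi⟩ := Function.ne_iff.mp hne
    rw [Finset.prod_eq_zero (Finset.mem_univ i) (not_not.mp ((hdet i (a' i)).not.mpr hi)),
      mul_zero]
  · rw [Finsupp.notMem_support_iff.mp ha, zero_mul, zero_mul]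

theorem signedTensorAct_single_comp_perm_apply {k m : Fin d → β}
    (hoff : ∀ i j, i ≠ j → ∀ a', ent a' (k j) (m i) = 0)
    {σ : Equiv.Perm (Fin d)} (hσ : k ∘ σ ≠ k) :
    signedTensorAct sgn ent x (Finsupp.single (k ∘ σ) 1) m = 0 := by
  obtain ⟨i, hi⟩ := Function.ne_iff.mp hσ
  have hσi : i ≠ σ i := fun h => hi (congrArg k h.symm)
  rw [signedTensorAct_single_apply, Finsupp.sum]
  refine Finset.sum_eq_zero fun a _ => ?_
  rw [Finset.prod_eq_zero (Finset.mem_univ i) (hoff i (σ i) hσi (a i)), mul_zero]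

/-- On `y_k` for an injective `k`, only the term `k` of the orbit sum survives at `m`, since
the other terms `k ∘ σ` have some position `i` carrying `k (σ i)` with `σ i ≠ i`. -/
theorem signedTensorAct_y_apply (Fam : CalFamily K β) (e : Fam.ι → β)
    (hvec : ∀ c, Fam.vec c = Finsupp.single (e c) 1) {k : Fin d → Fam.ι} {m : Fin d → β}
    (hk : Function.Injective (e ∘ k)) (hoff : ∀ i j, i ≠ j → ∀ a', ent a' (e (k j)) (m i) = 0) :
    signedTensorAct sgn ent x (Fam.y k) m =
      signedTensorAct sgn ent x (Finsupp.single (e ∘ k) 1) m := by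
  rw [Fam.y_eq_sum_single_of_injective e hvec hk.of_comp, map_sum, Finsupp.finsetSum_apply,
    Finset.sum_eq_single_of_mem k (Fam.mem_orbit_self k)]
  · rw [map_smul, Finsupp.smul_apply, smul_eq_mul, Even.neg_one_pow ⟨_, rfl⟩, one_mul]
  · intro b' hb' hne
    obtain ⟨σ, rfl⟩ := (Finset.mem_filter.mp hb').2
    have hne' : (e ∘ k) ∘ σ ≠ e ∘ k := fun h =>
      hne (funext fun i => congrArg k (hk (congrFun h i)))
    rw [map_smul, Finsupp.smul_apply, ← Function.comp_assoc,
      signedTensorAct_single_comp_perm_apply (k := e ∘ k) hoff hne', smul_zero]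

theorem coeff_eq_zero_of_signedTensorAct_y_eq_zero (Fam : CalFamily K β) (e : Fam.ι → β)
    (hvec : ∀ c, Fam.vec c = Finsupp.single (e c) 1) {k : Fin d → Fam.ι} {m : Fin d → β}
    {a : Fin d → α} (hk : Function.Injective (e ∘ k))
    (hdet : ∀ i, Detects ent (a i) (e (k i)) (m i))
    (hoff : ∀ i j, i ≠ j → ∀ a', ent a' (e (k j)) (m i) = 0)
    (h : signedTensorAct sgn ent x (Fam.y k) = 0) :
    x a = 0 := by
  have hm := congrArg (· m) h
  simp only [Finsupp.zero_apply] at hm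
  rw [signedTensorAct_y_apply Fam e hvec hk hoff,
    signedTensorAct_single_apply_of_detects (k := e ∘ k) hdet] at hm
  refine (mul_eq_zero.mp hm).resolve_right (mul_ne_zero (pow_ne_zero _ (by norm_num)) ?_)
  exact Finset.prod_ne_zero_iff.mpr fun i _ => ((hdet i) (a i)).mpr rfl

end SignedTensorAction

section TestVectors

variable {F : Type} [Field F] {ℓ : ℕ}

/-- `e_ℓ` annihilates every `e_j` (`j ∈ J`), so it is tested on the arrow `a_{ℓ,ℓ-1}`. -/
def testL (hl : 0 < ℓ) : ZB ℓ → TB ℓ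
  | Sum.inl i => if h : (i : ℕ) < ℓ then Et ⟨i, h⟩ else Ut ⟨ℓ - 1, by omega⟩
  | Sum.inr (Sum.inl t) =>
      if h : (t : ℕ) + 1 < ℓ then Et ⟨(t : ℕ) + 1, h⟩ else Ut ⟨ℓ - 1, by omega⟩
  | Sum.inr (Sum.inr (Sum.inl j)) => Et j
  | Sum.inr (Sum.inr (Sum.inr j)) => Et j

def outL (hl : 0 < ℓ) : ZB ℓ → TB ℓ
  | Sum.inl i => if h : (i : ℕ) < ℓ then Et ⟨i, h⟩ else Ut ⟨ℓ - 1, by omega⟩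
  | Sum.inr (Sum.inl t) => if h : (t : ℕ) + 1 < ℓ then Dt t h else Ct t
  | Sum.inr (Sum.inr (Sum.inl j)) => Ut j
  | Sum.inr (Sum.inr (Sum.inr j)) => Ct j

/-- The right-action analogue of `testL`; the index reversal `i ↦ ℓ - 1 - i` reflects the
identification of the Ringel dual `Z'` with `Z`. -/
def testR : ZB ℓ → TB ℓ
  | Sum.inl i => if h : (i : ℕ) < ℓ then Et ⟨ℓ - 1 - i, by omega⟩ else u0
  | Sum.inr (Sum.inl i) => Et ⟨ℓ - 1 - (i : ℕ), by omega⟩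
  | Sum.inr (Sum.inr (Sum.inl i)) =>
      if h : (i : ℕ) + 1 < ℓ then Et ⟨ℓ - 2 - (i : ℕ), by omega⟩ else u0
  | Sum.inr (Sum.inr (Sum.inr i)) => Et ⟨ℓ - 1 - (i : ℕ), by omega⟩

def outR (hl : 0 < ℓ) : ZB ℓ → TB ℓ
  | Sum.inl i => if h : (i : ℕ) < ℓ then Et ⟨ℓ - 1 - i, by omega⟩ else u0
  | Sum.inr (Sum.inl i) =>
      if h0 : ℓ - 1 - (i : ℕ) = 0 then u0 else Ut ⟨ℓ - 2 - (i : ℕ), by omega⟩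
  | Sum.inr (Sum.inr (Sum.inl i)) =>
      if h : (i : ℕ) + 1 < ℓ then
        Dt ⟨ℓ - 2 - (i : ℕ), by omega⟩ (show ℓ - 2 - (i : ℕ) + 1 < ℓ by omega)
      else Ct ⟨0, hl⟩
  | Sum.inr (Sum.inr (Sum.inr i)) => Ct ⟨ℓ - 1 - (i : ℕ), by omega⟩

theorem actT_testL_outL_of_ne (hl : 0 < ℓ) {z z' : ZB ℓ} (h : z ≠ z') :
    actT F z (testL hl z') (outL hl z') = 0 := by
  rcases z' with i' | t' | j' | j' <;> rcases z with i | t | j | j <;>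
    simp only [testL, outL] <;> (try split_ifs) <;>
    simp_all [actT, toZ, mulZ, pushEnc, encB, srcZ, tgtZ, eZ, dZ, uZ, cZ, Et, Ut, Dt, Ct, u0,
      Fin.val_succ, Fin.val_castSucc, Finsupp.sum_single_index, Finsupp.single_apply,
      Fin.ext_iff, Finsupp.sum_zero_index] <;> (try split_ifs) <;>
    (try simp_all [pushEnc, encB, dZ, uZ, cZ, Et, Ut, Dt, Ct, u0, Fin.ext_iff,
      Finsupp.sum_single_index, Finsupp.sum_zero_index, Finsupp.single_apply]) <;>
    (try omega)

theorem actT_testL_outL_self (hl : 0 < ℓ) (z : ZB ℓ) :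
    actT F z (testL hl z) (outL hl z) = 1 := by
  rcases z with i | t | j | j
  · rcases Nat.lt_or_ge (i : ℕ) ℓ with hi | hi
    · simp [testL, outL, hi, actT, toZ, mulZ, pushEnc, encB, srcZ, tgtZ, eZ, Et,
        Finsupp.sum_single_index, Fin.ext_iff]
    · have hieq : (i : ℕ) = ℓ - 1 + 1 := by omega
      simp only [testL, outL, dif_neg hi.not_gt]
      simp [actT, toZ, mulZ, pushEnc, encB, srcZ, tgtZ, eZ, uZ, Ut, hieq,
        Finsupp.sum_single_index, Fin.ext_iff]
  · rcases Nat.lt_or_ge ((t : ℕ) + 1) ℓ with ht | ht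
    · simp [testL, outL, ht, actT, toZ, mulZ, pushEnc, encB, srcZ, tgtZ, eZ, dZ, Et, Dt,
        Finsupp.sum_single_index, Fin.ext_iff]
    · have hteq : (t : ℕ) = ℓ - 1 := by omega
      simp only [testL, outL, dif_neg ht.not_gt]
      simp [actT, toZ, mulZ, pushEnc, encB, srcZ, tgtZ, dZ, uZ, cZ, Ut, Ct,
        hteq, Finsupp.sum_single_index, Fin.ext_iff]
  · simp [testL, outL, actT, toZ, mulZ, pushEnc, encB, srcZ, tgtZ, eZ, uZ, Et, Ut,
      Finsupp.sum_single_index, Fin.ext_iff]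
  · simp [testL, outL, actT, toZ, mulZ, pushEnc, encB, srcZ, tgtZ, eZ, cZ, Et, Ct,
      Finsupp.sum_single_index, Fin.ext_iff]

theorem ractT_testR_outR_of_ne (hl : 0 < ℓ) {z z' : ZB ℓ} (h : z ≠ z') :
    ractT F (testR z') z (outR hl z') = 0 := by
  rcases z' with i' | t' | j' | j' <;> rcases z with i | t | j | j <;>
    simp only [testR, outR] <;> (try split_ifs) <;>
    simp_all [ractT, toZ, srcZ, Et, Ut, Dt, Ct, u0, eZ, dZ, uZ, cZ,
      Fin.val_succ, Fin.val_castSucc, Finsupp.single_apply, Fin.ext_iff] <;>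
    (try split_ifs) <;>
    (try simp_all [Et, Ut, Dt, Ct, u0, Fin.ext_iff, Finsupp.single_apply]) <;>
    (try omega)

theorem ractT_testR_outR_self_ne_zero (hl : 0 < ℓ) (z : ZB ℓ) :
    ractT F (testR z) z (outR hl z) ≠ 0 := by
  rcases z with i | t | j | j <;>
    simp only [testR, outR] <;> (try split_ifs) <;>
    simp_all [ractT, toZ, srcZ, Et, Ut, Dt, Ct, u0, eZ, dZ, uZ, cZ,
      Fin.val_succ, Fin.val_castSucc, Finsupp.single_apply, Fin.ext_iff] <;>
    (try split_ifs) <;>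
    (try simp_all [Et, Ut, Dt, Ct, u0, Fin.ext_iff, Finsupp.single_apply]) <;>
    (try omega)

theorem detects_actT (hl : 0 < ℓ) (z : ZB ℓ) :
    Detects (actT F) z (testL hl z) (outL hl z) := fun z' =>
  ⟨fun h => not_not.mp fun hne => h (actT_testL_outL_of_ne hl hne),
    by rintro rfl; simp [actT_testL_outL_self]⟩

theorem detects_ractT (hl : 0 < ℓ) (z : ZB ℓ) :
    Detects (fun z t => ractT F t z) z (testR z) (outR hl z) := fun z' =>
  ⟨fun h => not_not.mp fun hne => h (ractT_testR_outR_of_ne hl hne),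
    by rintro rfl; exact ractT_testR_outR_self_ne_zero hl z'⟩

end TestVectors

section MatrixActions

variable {F : Type} [Field F] {ℓ n : ℕ}

theorem lactMT_apply_apply (a : (zigData F ℓ).MBt n) (t o : TB ℓ) (p q r c : Fin n) :
    lactMT F a (t, p, q) (o, r, c) =
      if a.2.2 = p ∧ a.2.1 = r ∧ q = c then actT F a.1 t o else 0 := by
  obtain ⟨z, r₀, s₀⟩ := a
  have hinj : Function.Injective fun t' : TB ℓ => ((t', r₀, q) : MTB ℓ n) :=
    fun _ _ h => congrArg Prod.fst h
  simp only [lactMT]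
  split_ifs with hs hrc hrc
  · obtain ⟨-, rfl, rfl⟩ := hrc
    exact Finsupp.mapDomain_apply hinj _ o
  · refine Finsupp.mapDomain_of_notMem_range _ _ fun ⟨t', ht'⟩ => hrc ⟨hs, ?_⟩
    cases ht'
    exact ⟨rfl, rfl⟩
  · exact absurd hrc.1 hs
  · rfl

theorem rmtT_apply_apply (t o : TB ℓ) (a : (zigData F ℓ).MBt n) (p q r c : Fin n) :
    rmtT F (t, p, q) a (o, r, c) =
      if q = a.2.1 ∧ p = r ∧ a.2.2 = c then ractT F t a.1 o else 0 := by
  obtain ⟨z, r₀, s₀⟩ := a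
  have hinj : Function.Injective fun t' : TB ℓ => ((t', p, s₀) : MTB ℓ n) :=
    fun _ _ h => congrArg Prod.fst h
  simp only [rmtT]
  split_ifs with hs hrc hrc
  · obtain ⟨-, rfl, rfl⟩ := hrc
    exact Finsupp.mapDomain_apply hinj _ o
  · refine Finsupp.mapDomain_of_notMem_range _ _ fun ⟨t', ht'⟩ => hrc ⟨hs, ?_⟩
    cases ht'
    exact ⟨rfl, rfl⟩
  · exact absurd hrc.1 hs
  · rfl

theorem Detects.lactMT {z : ZB ℓ} {t o : TB ℓ} (h : Detects (actT F) z t o) (r s c : Fin n) :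
    Detects (lactMT F) (z, r, s) (t, s, c) (o, r, c) := by
  rintro ⟨z', r', s'⟩
  rw [lactMT_apply_apply]
  by_cases hrs : s' = s ∧ r' = r
  · obtain ⟨rfl, rfl⟩ := hrs
    rw [if_pos ⟨rfl, rfl, rfl⟩]
    exact (h z').trans ⟨fun hz => hz ▸ rfl, congrArg Prod.fst⟩
  · rw [if_neg fun hc => hrs ⟨hc.1, hc.2.1⟩]
    exact ⟨fun h0 => absurd rfl h0,
      fun heq => absurd ⟨congrArg (·.2.2) heq, congrArg (·.2.1) heq⟩ hrs⟩

theorem Detects.rmtT {z : ZB ℓ} {t o : TB ℓ} (h : Detects (fun z t => ractT F t z) z t o)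
    (r s c : Fin n) :
    Detects (fun a m => rmtT F m a) (z, r, s) (t, c, r) (o, c, s) := by
  rintro ⟨z', r', s'⟩
  rw [rmtT_apply_apply]
  by_cases hrs : r' = r ∧ s' = s
  · obtain ⟨rfl, rfl⟩ := hrs
    rw [if_pos ⟨rfl, rfl, rfl⟩]
    exact (h z').trans ⟨fun hz => hz ▸ rfl, congrArg Prod.fst⟩
  · rw [if_neg fun hc => hrs ⟨hc.1.symm, hc.2.2⟩]
    exact ⟨fun h0 => absurd rfl h0,
      fun heq => absurd ⟨congrArg (·.2.1) heq, congrArg (·.2.2) heq⟩ hrs⟩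

theorem lactMT_apply_apply_of_ne {c c' : Fin n} (h : c ≠ c') (a : (zigData F ℓ).MBt n)
    (t o : TB ℓ) (p r : Fin n) :
    lactMT F a (t, p, c) (o, r, c') = 0 := by
  rw [lactMT_apply_apply, if_neg fun hc => h hc.2.2]

theorem rmtT_apply_apply_of_ne {c c' : Fin n} (h : c ≠ c') (a : (zigData F ℓ).MBt n)
    (t o : TB ℓ) (q s : Fin n) :
    rmtT F (t, c, q) a (o, c', s) = 0 := by
  rw [rmtT_apply_apply, if_neg fun hc => h hc.2.1]

end MatrixActions

theorem statement4_general
    (F : Type) [Field F]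
    (ℓ n d : ℕ) (hℓ : 1 ≤ ℓ) (hdn : d ≤ n) :
    (∀ x ∈ (zigData F ℓ).alg n d,
      (∀ v ∈ scrT F ℓ n d, (fullMS F ℓ n).act d x v = 0) → x = 0) ∧
    (∀ x ∈ (zigData F ℓ).alg n d,
      (∀ v ∈ scrT F ℓ n d, rActT F ℓ n d x v = 0) → x = 0) := by
  have hcol : Function.Injective (Fin.castLE hdn) := Fin.castLE_injective hdn
  refine ⟨fun x _ hx => Finsupp.ext fun a => ?_, fun x _ hx => Finsupp.ext fun a => ?_⟩
  · let k : Fin d → MTB ℓ n := fun i => (testL hℓ (a i).1, (a i).2.2, Fin.castLE hdn i)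
    have hk : Function.Injective k := fun i j h => hcol (congrArg (·.2.2) h)
    exact coeff_eq_zero_of_signedTensorAct_y_eq_zero (stdFam F pMT ordMT) id (fun _ => rfl)
      (m := fun i => (outL hℓ (a i).1, (a i).2.1, Fin.castLE hdn i)) hk
      (fun i => (detects_actT hℓ (a i).1).lactMT _ _ _)
      (fun i j hij _ => lactMT_apply_apply_of_ne (hcol.ne hij.symm) _ _ _ _ _)
      (hx _ (CalFamily.y_mem_gammaTilde _ (CalFamily.isSeq_of_injective _ hk)))
  · let k : Fin d → MTB ℓ n := fun i => (testR (a i).1, Fin.castLE hdn i, (a i).2.1)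
    have hk : Function.Injective k := fun i j h => hcol (congrArg (·.2.1) h)
    exact coeff_eq_zero_of_signedTensorAct_y_eq_zero (stdFam F pMT ordMT) id (fun _ => rfl)
      (m := fun i => (outR hℓ (a i).1, Fin.castLE hdn i, (a i).2.2)) hk
      (fun i => (detects_ractT hℓ (a i).1).rmtT _ _ _)
      (fun i j hij _ => rmtT_apply_apply_of_ne (hcol.ne hij.symm) _ _ _ _ _)
      (hx _ (CalFamily.y_mem_gammaTilde _ (CalFamily.isSeq_of_injective _ hk)))

theorem statement4
    (R : Type) [CommRing R] [IsDomain R] [IsPrincipalIdealRing R] [CharZero R]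
    (F : Type) [Field F] [Algebra R F]
    (ℓ n d : ℕ) [NeZero n] (hℓ : 1 ≤ ℓ) (hdn : d ≤ n) :
    (∀ x ∈ (zigData F ℓ).alg n d,
      (∀ v ∈ scrT F ℓ n d, (fullMS F ℓ n).act d x v = 0) → x = 0) ∧
    (∀ x ∈ (zigData F ℓ).alg n d,
      (∀ v ∈ scrT F ℓ n d, rActT F ℓ n d x v = 0) → x = 0) :=
  statement4_general F ℓ n d hℓ hdn

end Paper
end

section
/- Let F be a field which is a module over a characteristic-0 principal ideal domain R, and let d ≤ n. For all λ ∈ Λ^I_+(n,d), the standard and costandard T^Z(n,d)-supermodules have equal formal characters: ch Δ(λ) = ch ∇(λ), i.e. dim η_μ Δ(λ) = dim η_μ ∇(λ) for every μ ∈ Λ^I(n,d). -/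
open scoped BigOperators
open Finsupp

set_option maxHeartbeats 1000000

open Classical

namespace Paper

/-!
Let `τ` be the anti-involution of `Z` reversing the arrows. The transpose
`ξ^a_{rs} ↦ ξ^{τ a}_{sr}` of `M_n(Z)`, extended to tensor powers with the sign
`(-1)^{#pairs of odd factors}`, is an anti-involution `J` of `T^Z(n,d)` fixing every `η_μ`.
Hence `J` carries the left ideal generated by `η_λ` onto the right one, fixes the ideal
`T^Z(n,d)^{>λ}`, and so maps the subquotient `η_μ Δ(λ)` isomorphically onto `Δ^op(λ) η_μ`,
whose dual is `η_μ ∇(λ)`.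
-/

noncomputable section

section Parity

variable {β : Type}

lemma neg_one_pow_eq_of_natCast_eq {R : Type} [Ring R] {m m' : ℕ}
    (h : (m : ZMod 2) = m') : (-1 : R) ^ m = (-1) ^ m' := by
  rw [neg_one_pow_eq_pow_mod_two, neg_one_pow_eq_pow_mod_two (n := m'),
    (ZMod.natCast_eq_natCast_iff' m m' 2).1 h]

lemma par2_mul_par2 (x y : Fin 3) :
    par2 x * par2 y = if x = 2 ∧ y = 2 then 1 else 0 := by
  unfold par2; split_ifs <;> simp_all

def oddPairs (p : β → Fin 3) {d : ℕ} (k : Fin d → β) : ℕ :=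
  (Finset.univ.filter fun q : Fin d × Fin d =>
    q.1 < q.2 ∧ p (k q.1) = 2 ∧ p (k q.2) = 2).card

lemma oddPairs_comp {p : β → Fin 3} {τ : β → β} (hp : ∀ x, p (τ x) = p x) {d : ℕ}
    (k : Fin d → β) : oddPairs p (τ ∘ k) = oddPairs p k := by
  simp only [oddPairs, Function.comp_apply, hp]

lemma natCast_oddPairs (p : β → Fin 3) {d : ℕ} (k : Fin d → β) :
    (oddPairs p k : ZMod 2) = ∑ q : Fin d × Fin d,
      if q.1 < q.2 then par2 (p (k q.1)) * par2 (p (k q.2)) else 0 := by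
  simp only [oddPairs, Finset.natCast_card_filter, par2_mul_par2, ite_and]

lemma natCast_koszul {α : Type} (pA : α → Fin 3) (pV : β → Fin 3) {d : ℕ}
    (a : Fin d → α) (k : Fin d → β) :
    (koszul pA pV a k : ZMod 2) = ∑ q : Fin d × Fin d,
      if q.1 < q.2 then par2 (pA (a q.2)) * par2 (pV (k q.1)) else 0 := by
  rw [koszul, Finset.natCast_card_filter,
    ← (Equiv.prodComm _ _).sum_comp]
  refine Finset.sum_congr rfl fun q _ => ?_
  simp only [Equiv.prodComm_apply, Prod.fst_swap, Prod.snd_swap, par2_mul_par2]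
  by_cases h1 : q.1 < q.2 <;> by_cases h2 : pA (a q.2) = 2 <;> by_cases h3 : pV (k q.1) = 2 <;>
    simp [h1, h2, h3]

lemma natCast_oddPairs_of_par2_add (p : β → Fin 3) {d : ℕ} {a k m : Fin d → β}
    (hm : ∀ i, par2 (p (m i)) = par2 (p (a i)) + par2 (p (k i))) :
    (oddPairs p m : ZMod 2)
      = oddPairs p a + oddPairs p k + koszul p p a k + koszul p p k a := by
  simp only [natCast_oddPairs, natCast_koszul, hm, ← Finset.sum_add_distrib]
  refine Finset.sum_congr rfl fun q _ => ?_
  split_ifs <;> ring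

lemma Finset.sum_filter_lt_comp_perm {ι M : Type} [Fintype ι] [LinearOrder ι] [AddCommMonoid M]
    (f : ι → ι → M) (hf : ∀ i j, i ≠ j → f i j = f j i) (σ : Equiv.Perm ι) :
    ∑ q ∈ Finset.univ.filter (fun q : ι × ι => q.1 < q.2), f (σ q.1) (σ q.2)
      = ∑ q ∈ Finset.univ.filter (fun q : ι × ι => q.1 < q.2), f q.1 q.2 := by
  let sortPair : ι × ι → ι × ι := fun q => if q.1 < q.2 then q else q.swap
  refine Finset.sum_nbij' (fun q => sortPair (σ q.1, σ q.2))
    (fun q => sortPair (σ.symm q.1, σ.symm q.2)) ?_ ?_ ?_ ?_ ?_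
  all_goals
    intro q hq
    simp only [Finset.mem_filter, Finset.mem_univ, true_and] at hq ⊢
  · have : σ q.1 ≠ σ q.2 := σ.injective.ne hq.ne
    by_cases h : σ q.1 < σ q.2 <;> simp [sortPair, h, lt_of_le_of_ne, not_lt.1, this.symm]
  · have : σ.symm q.1 ≠ σ.symm q.2 := σ.symm.injective.ne hq.ne
    by_cases h : σ.symm q.1 < σ.symm q.2 <;> simp [sortPair, h, lt_of_le_of_ne, not_lt.1, this.symm]
  · by_cases h : σ q.1 < σ q.2 <;> simp [sortPair, h, hq, hq.not_gt]
  · by_cases h : σ.symm q.1 < σ.symm q.2 <;> simp [sortPair, h, hq, hq.not_gt]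
  · by_cases h : σ q.1 < σ q.2 <;> simp [sortPair, h]
    exact hf _ _ (σ.injective.ne hq.ne)

def oddInversions (p : β → Fin 3) (o : β → ℕ) {d : ℕ} (b : Fin d → β) : ℕ :=
  (Finset.univ.filter fun q : Fin d × Fin d =>
    q.1 < q.2 ∧ p (b q.1) = 2 ∧ p (b q.2) = 2 ∧ o (b q.2) < o (b q.1)).card

lemma oddInversions_comp {p : β → Fin 3} {τ : β → β} {d : ℕ} (hp : ∀ x, p (τ x) = p x)
    (o : β → ℕ) (b : Fin d → β) :
    oddInversions p o (τ ∘ b) = oddInversions p (o ∘ τ) b := by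
  simp only [oddInversions, Function.comp_apply, hp]

/-- For a pair of distinct odd entries, the three indicator terms sum to `1` exactly when
`o` and `o'` order the pair in the same way, a condition symmetric in the pair. -/
lemma natCast_oddInversions_add_oddPairs_comp_perm {p : β → Fin 3} {o o' : β → ℕ} {d : ℕ}
    (ho : Set.InjOn o {x | p x = 2}) (ho' : Set.InjOn o' {x | p x = 2}) {b : Fin d → β}
    (hb : ∀ i j, i ≠ j → b i = b j → p (b i) ≠ 2) (σ : Equiv.Perm (Fin d)) :
    ((oddInversions p o (b ∘ σ) + oddInversions p o' (b ∘ σ) + oddPairs p (b ∘ σ) : ℕ) : ZMod 2)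
      = ((oddInversions p o b + oddInversions p o' b + oddPairs p b : ℕ) : ZMod 2) := by
  let g : β → β → ZMod 2 := fun x y => if p x = 2 ∧ p y = 2 then
    (if o y < o x then 1 else 0) + (if o' y < o' x then 1 else 0) + 1 else 0
  have hexpand : ∀ c : Fin d → β,
      ((oddInversions p o c + oddInversions p o' c + oddPairs p c : ℕ) : ZMod 2)
        = ∑ q ∈ Finset.univ.filter (fun q : Fin d × Fin d => q.1 < q.2), g (c q.1) (c q.2) := by
    intro c
    simp only [oddInversions, oddPairs, Nat.cast_add, Finset.natCast_card_filter,
      Finset.sum_filter, ← Finset.sum_add_distrib]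
    refine Finset.sum_congr rfl fun q _ => ?_
    by_cases hq : q.1 < q.2 <;> by_cases h1 : p (c q.1) = 2 <;> by_cases h2 : p (c q.2) = 2 <;>
      simp [g, hq, h1, h2]
  have hsymm : ∀ i j, i ≠ j → g (b i) (b j) = g (b j) (b i) := by
    intro i j hij
    by_cases hodd : p (b i) = 2 ∧ p (b j) = 2
    · have hne : b i ≠ b j := fun h => hb i j hij h hodd.1
      rcases (ho.ne hodd.1 hodd.2 hne).lt_or_gt with h | h <;>
        rcases (ho'.ne hodd.1 hodd.2 hne).lt_or_gt with h' | h' <;>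
          simp [g, hodd, h, h', h.not_gt, h'.not_gt] <;> decide
    · simp [g, hodd, and_comm]
  rw [hexpand, hexpand]
  exact Finset.sum_filter_lt_comp_perm (fun i j => g (b i) (b j)) hsymm σ

end Parity

section KAct

variable {K : Type} [CommRing K] {α β : Type} [Fintype α] [DecidableEq α]
variable (pA : α → Fin 3) (pV : β → Fin 3)

lemma kact_zero (act : α → β → (β →₀ K)) {d : ℕ} :
    kact K pA pV act (0 : TPow K α d) = 0 :=
  Finsupp.lhom_ext fun k c => by simp [kact]

lemma kact_add (act : α → β → (β →₀ K)) {d : ℕ} (x y : TPow K α d) :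
    kact K pA pV act (x + y) = kact K pA pV act x + kact K pA pV act y :=
  Finsupp.lhom_ext fun k c => by
    simp [kact, Finsupp.sum_add_index', add_mul, add_smul]

lemma kact_smul (act : α → β → (β →₀ K)) {d : ℕ} (c : K) (x : TPow K α d) :
    kact K pA pV act (c • x) = c • kact K pA pV act x :=
  Finsupp.lhom_ext fun k c' => by
    simp [kact, Finsupp.sum_smul_index', Finsupp.smul_sum, mul_assoc, smul_smul, mul_left_comm]

lemma rkact_zero (ract : β → α → (β →₀ K)) {d : ℕ} :
    rkact K pA pV ract (0 : TPow K α d) = 0 :=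
  Finsupp.lhom_ext fun k c => by simp [rkact]

lemma rkact_add (ract : β → α → (β →₀ K)) {d : ℕ} (x y : TPow K α d) :
    rkact K pA pV ract (x + y) = rkact K pA pV ract x + rkact K pA pV ract y :=
  Finsupp.lhom_ext fun k c => by
    simp [rkact, Finsupp.sum_add_index', add_mul, add_smul]

lemma rkact_smul (ract : β → α → (β →₀ K)) {d : ℕ} (c : K) (x : TPow K α d) :
    rkact K pA pV ract (c • x) = c • rkact K pA pV ract x :=
  Finsupp.lhom_ext fun k c' => by
    simp [rkact, Finsupp.sum_smul_index', Finsupp.smul_sum, mul_assoc, smul_smul, mul_left_comm]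

lemma kact_single_single (act : α → β → (β →₀ K)) {d : ℕ} (a : Fin d → α) (k : Fin d → β) :
    kact K pA pV act (Finsupp.single a 1) (Finsupp.single k 1)
      = ((-1 : K) ^ koszul pA pV a k) • tensorOf K (fun i => act (a i) (k i)) := by
  simp [kact]

lemma rkact_single_single (ract : β → α → (β →₀ K)) {d : ℕ} (a : Fin d → α) (k : Fin d → β) :
    rkact K pA pV ract (Finsupp.single a 1) (Finsupp.single k 1)
      = ((-1 : K) ^ koszul pV pA k a) • tensorOf K (fun i => ract (k i) (a i)) := by
  simp [rkact]

end KAct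

section Transpose

variable (K : Type) [CommRing K] {β : Type}

/-- `a₁ ⊗ ⋯ ⊗ a_d ↦ (-1)^{oddPairs} τ a₁ ⊗ ⋯ ⊗ τ a_d`; the sign is what makes it reverse
Koszul-signed products (`transposeTPow_kact`). -/
def transposeTPow (p : β → Fin 3) (τ : β → β) (d : ℕ) : TPow K β d →ₗ[K] TPow K β d :=
  Finsupp.lsum K fun k => LinearMap.toSpanSingleton K _
    (((-1 : K) ^ oddPairs p k) • Finsupp.single (τ ∘ k) 1)

def IsMonomialMul (p : β → Fin 3) (mul : β → β → (β →₀ K)) : Prop :=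
  ∀ x y, mul x y = 0 ∨ ∃ z, mul x y = Finsupp.single z 1 ∧ par2 (p z) = par2 (p x) + par2 (p y)

variable {K} {p : β → Fin 3} {τ : β → β} {d : ℕ}

lemma transposeTPow_single (k : Fin d → β) (c : K) :
    transposeTPow K p τ d (Finsupp.single k c)
      = (c * (-1) ^ oddPairs p k) • Finsupp.single (τ ∘ k) 1 := by
  simp [transposeTPow]

lemma transposeTPow_involutive (hτ : Function.Involutive τ) (hp : ∀ x, p (τ x) = p x) :
    Function.Involutive (transposeTPow K p τ d) := by
  intro v
  induction v using Finsupp.induction_linear with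
  | zero => simp
  | add f g hf hg => rw [map_add, map_add, hf, hg]
  | single k c =>
    rw [transposeTPow_single, map_smul, transposeTPow_single, oddPairs_comp hp,
      ← Function.comp_assoc, hτ.comp_self, Function.id_comp, smul_smul, one_mul, mul_assoc,
      ← pow_add, ← two_mul, pow_mul, neg_one_sq, one_pow, mul_one, Finsupp.smul_single_one]

lemma tensorOf_single_one (m : Fin d → β) :
    tensorOf K (fun i => Finsupp.single (m i) 1) = Finsupp.single m 1 := by
  nontriviality K
  simp [tensorOf]

lemma tensorOf_eq_zero {v : Fin d → (β →₀ K)} (i : Fin d) (h : v i = 0) : tensorOf K v = 0 :=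
  Finset.sum_eq_zero fun k _ => by
    rw [Finset.prod_eq_zero (Finset.mem_univ i) (by simp [h]), zero_smul]

lemma koszul_comp (hp : ∀ x, p (τ x) = p x) (a k : Fin d → β) :
    koszul p p (τ ∘ a) (τ ∘ k) = koszul p p a k := by
  simp only [koszul, Function.comp_apply, hp]

variable [Fintype β] [DecidableEq β] {mul : β → β → (β →₀ K)}

lemma transposeTPow_kact_single_single (hp : ∀ x, p (τ x) = p x)
    (hmul : ∀ x y, mul (τ y) (τ x) = Finsupp.mapDomain τ (mul x y)) (hmono : IsMonomialMul K p mul)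
    (a k : Fin d → β) :
    transposeTPow K p τ d (kact K p p mul (Finsupp.single a 1) (Finsupp.single k 1))
      = rkact K p p mul (transposeTPow K p τ d (Finsupp.single a 1))
          (transposeTPow K p τ d (Finsupp.single k 1)) := by
  rw [kact_single_single, transposeTPow_single, transposeTPow_single, one_mul, one_mul,
    rkact_smul, LinearMap.smul_apply, map_smul, map_smul, rkact_single_single, koszul_comp hp]
  by_cases hzero : ∃ i, mul (a i) (k i) = 0
  · obtain ⟨i, hi⟩ := hzero
    have hi' : mul (τ (k i)) (τ (a i)) = 0 := by rw [hmul, hi, Finsupp.mapDomain_zero]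
    rw [tensorOf_eq_zero i hi, tensorOf_eq_zero (v := fun i => mul ((τ ∘ k) i) ((τ ∘ a) i)) i hi']
    simp
  push Not at hzero
  choose m hm hpar using fun i => (hmono (a i) (k i)).resolve_left (hzero i)
  have hm' : ∀ i, mul ((τ ∘ k) i) ((τ ∘ a) i) = Finsupp.single ((τ ∘ m) i) 1 := fun i => by
    simp [hmul, hm i, Finsupp.mapDomain_single]
  simp only [hm, hm', tensorOf_single_one, transposeTPow_single, one_mul, smul_smul, ← pow_add]
  congr 1
  apply neg_one_pow_eq_of_natCast_eq
  have hsplit := natCast_oddPairs_of_par2_add p hpar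
  have htwo : (2 : ZMod 2) = 0 := rfl
  push_cast
  linear_combination hsplit + (koszul p p a k : ZMod 2) * htwo

theorem transposeTPow_kact (hp : ∀ x, p (τ x) = p x)
    (hmul : ∀ x y, mul (τ y) (τ x) = Finsupp.mapDomain τ (mul x y)) (hmono : IsMonomialMul K p mul)
    (x v : TPow K β d) :
    transposeTPow K p τ d (kact K p p mul x v)
      = rkact K p p mul (transposeTPow K p τ d x) (transposeTPow K p τ d v) := by
  induction x using Finsupp.induction_linear with
  | zero => simp [kact_zero, rkact_zero]
  | add f g hf hg =>
    rw [kact_add, LinearMap.add_apply, map_add, map_add, hf, hg, rkact_add, LinearMap.add_apply]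
  | single a c =>
    induction v using Finsupp.induction_linear with
    | zero => simp
    | add f g hf hg => rw [map_add, map_add, hf, hg, map_add, map_add]
    | single k c' =>
      rw [← Finsupp.smul_single_one a c, ← Finsupp.smul_single_one k c', kact_smul,
        LinearMap.smul_apply, map_smul, map_smul, map_smul, map_smul, map_smul, rkact_smul,
        LinearMap.smul_apply, map_smul, transposeTPow_kact_single_single hp hmul hmono]

end Transpose

namespace CalFamily

variable {K : Type} [CommRing K] {β : Type} {Fm : CalFamily K β} {τ : Fm.ι → Fm.ι} {d : ℕ}

lemma isSeq_comp (hτ : Function.Injective τ) (hp : ∀ x, Fm.part (τ x) = Fm.part x)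
    {b : Fin d → Fm.ι} (hb : Fm.IsSeq b) : Fm.IsSeq (τ ∘ b) := fun i j hij heq => by
  simpa [hp] using hb i j hij (hτ heq)

lemma mfac_comp (hτ : Function.Involutive τ) (hp : ∀ x, Fm.part (τ x) = Fm.part x)
    (b : Fin d → Fm.ι) : Fm.mfac (τ ∘ b) = Fm.mfac b := by
  refine Finset.prod_nbij' τ τ ?_ ?_ (fun c _ => hτ c) (fun c _ => hτ c) fun c _ => ?_
  · simp [hp]
  · simp [hp]
  · simp only [Function.comp_apply, hτ.eq_iff]

end CalFamily

section StdFam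

variable {K : Type} [CommRing K] {β : Type} [Fintype β] [DecidableEq β]
  {p : β → Fin 3} {o : β → ℕ} {τ : β → β} {d : ℕ}

/-- The `S_d`-orbit of a tuple, as `CalFamily.orbit` for `stdFam` but typed over `β` itself. -/
def permOrbit (b : Fin d → β) : Finset (Fin d → β) :=
  Finset.univ.filter fun b' => ∃ σ : Equiv.Perm (Fin d), b' = b ∘ σ

lemma permOrbit_comp (b : Fin d → β) :
    permOrbit (τ ∘ b) = (permOrbit b).image (τ ∘ ·) := by
  ext c
  simp only [permOrbit, Finset.mem_image, Finset.mem_filter, Finset.mem_univ, true_and]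
  constructor
  · rintro ⟨σ, rfl⟩
    exact ⟨b ∘ σ, ⟨σ, rfl⟩, rfl⟩
  · rintro ⟨_, ⟨σ, rfl⟩, rfl⟩
    exact ⟨σ, rfl⟩

lemma stdFam_x (b : Fin d → β) :
    (stdFam K p o).x b = ∑ b' ∈ permOrbit b,
      ((-1 : K) ^ (oddInversions p o b + oddInversions p o b')) • Finsupp.single b' 1 :=
  Finset.sum_congr rfl fun b' _ => congrArg (_ • ·) (tensorOf_single_one b')

lemma transposeTPow_x (hτ : Function.Involutive τ) (hp : ∀ x, p (τ x) = p x)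
    (ho : Set.InjOn o {x | p x = 2}) {b : Fin d → β} (hb : (stdFam K p o).IsSeq b) :
    transposeTPow K p τ d ((stdFam K p o).x b)
      -- typing `τ ∘ b` over `β` rather than `(stdFam K p o).ι` lets `rw` match it
      = ((-1 : K) ^ oddPairs p b) • (stdFam K p o).x (τ ∘ b : Fin d → β) := by
  have hoτ : Set.InjOn (o ∘ τ) {x | p x = 2} := fun x hx y hy h =>
    hτ.injective (ho (by simpa [hp] using hx) (by simpa [hp] using hy) h)
  have hcomp : Function.Injective (τ ∘ · : (Fin d → β) → (Fin d → β)) :=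
    fun _ _ h => funext fun i => hτ.injective (congrFun h i)
  rw [stdFam_x, stdFam_x, permOrbit_comp, Finset.sum_image hcomp.injOn, map_sum, Finset.smul_sum]
  refine Finset.sum_congr rfl fun b' hb' => ?_
  obtain ⟨σ, rfl⟩ := (Finset.mem_filter.1 hb').2
  rw [map_smul, transposeTPow_single, one_mul, smul_smul, smul_smul, ← pow_add, ← pow_add,
    oddInversions_comp hp, oddInversions_comp hp]
  congr 1
  apply neg_one_pow_eq_of_natCast_eq
  have hperm := natCast_oddInversions_add_oddPairs_comp_perm ho hoτ hb σ
  have htwo : (2 : ZMod 2) = 0 := rfl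
  push_cast at hperm ⊢
  linear_combination hperm +
    ((oddInversions p o b : ZMod 2) - oddInversions p (o ∘ τ) (b ∘ σ)) * htwo

lemma transposeTPow_y (hτ : Function.Involutive τ) (hp : ∀ x, p (τ x) = p x)
    (ho : Set.InjOn o {x | p x = 2}) {b : Fin d → β} (hb : (stdFam K p o).IsSeq b) :
    transposeTPow K p τ d ((stdFam K p o).y b)
      = ((-1 : K) ^ oddPairs p b) • (stdFam K p o).y (τ ∘ b : Fin d → β) := by
  have hmfac : (stdFam K p o).mfac (τ ∘ b : Fin d → β) = (stdFam K p o).mfac b :=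
    CalFamily.mfac_comp (Fm := stdFam K p o) (τ := τ) hτ hp b
  unfold CalFamily.y
  rw [map_nsmul, transposeTPow_x hτ hp ho hb, hmfac, smul_comm]

lemma transposeTPow_mem_gammaTilde (hτ : Function.Involutive τ) (hp : ∀ x, p (τ x) = p x)
    (ho : Set.InjOn o {x | p x = 2}) {x : TPow K β d} (hx : x ∈ gammaTilde K (stdFam K p o) d) :
    transposeTPow K p τ d x ∈ gammaTilde K (stdFam K p o) d := by
  refine Submodule.span_le.2 ?_ (Submodule.map_span (transposeTPow K p τ d) _ ▸
    Submodule.mem_map_of_mem hx)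
  rintro _ ⟨_, ⟨b, hb, rfl⟩, rfl⟩
  rw [transposeTPow_y hτ hp ho hb]
  exact Submodule.smul_mem _ _ (Submodule.subset_span
    ⟨τ ∘ b, CalFamily.isSeq_comp (Fm := stdFam K p o) hτ.injective hp hb, rfl⟩)

lemma transposeTPow_y_of_forall_fixed (hτ : Function.Involutive τ) (hp : ∀ x, p (τ x) = p x)
    (ho : Set.InjOn o {x | p x = 2}) {b : Fin d → β} (hfix : ∀ i, τ (b i) = b i)
    (heven : ∀ i, p (b i) ≠ 2) :
    transposeTPow K p τ d ((stdFam K p o).y b) = (stdFam K p o).y b := by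
  have hpairs : oddPairs p b = 0 := by simp [oddPairs, heven]
  rw [transposeTPow_y hτ hp ho fun i _ _ _ => heven i, hpairs, pow_zero, one_smul]
  congr 1
  exact funext hfix

end StdFam

lemma Nat.eq_and_eq_of_mul_add_eq_mul_add {n a b r r' : ℕ} (hr : r < n) (hr' : r' < n)
    (h : a * n + r = b * n + r') : a = b ∧ r = r' := by
  have hrr : r = r' := by
    simpa [Nat.add_mod, Nat.mod_eq_of_lt hr, Nat.mod_eq_of_lt hr'] using congrArg (· % n) h
  subst hrr
  exact ⟨Nat.eq_of_mul_eq_mul_right (by omega) (Nat.add_right_cancel h), rfl⟩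

namespace SchurAlgData

variable {F : Type} [CommRing F] {ℓ : ℕ} (S : SchurAlgData F ℓ) (n : ℕ)

/-- The transpose `ξ^a_{rs} ↦ ξ^{τ a}_{sr}` of the basis of `M_n(A)` induced by `τ`. -/
def transposeM (τ : S.βA → S.βA) (x : S.MBt n) : S.MBt n := (τ x.1, x.2.2, x.2.1)

variable {S n} {τ : S.βA → S.βA}

lemma transposeM_involutive (hτ : Function.Involutive τ) :
    Function.Involutive (S.transposeM n τ) := fun x => by
  simp [transposeM, hτ x.1]

lemma pM_transposeM (hp : ∀ x, S.pA (τ x) = S.pA x) (x : S.MBt n) :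
    S.pM n (S.transposeM n τ x) = S.pM n x :=
  hp x.1

lemma mulM_transposeM (hmul : ∀ x y, S.mulA (τ y) (τ x) = Finsupp.mapDomain τ (S.mulA x y))
    (x y : S.MBt n) :
    S.mulM n (S.transposeM n τ y) (S.transposeM n τ x)
      = Finsupp.mapDomain (S.transposeM n τ) (S.mulM n x y) := by
  obtain ⟨a, r, s⟩ := x
  obtain ⟨b, u, v⟩ := y
  by_cases h : s = u
  · simp only [mulM, transposeM, h, if_true, hmul, ← Finsupp.mapDomain_comp]
    rfl
  · simp [mulM, transposeM, h, Ne.symm h]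

lemma isMonomialMul_mulM (hmono : IsMonomialMul F S.pA S.mulA) :
    IsMonomialMul F (S.pM n) (S.mulM n) := by
  rintro ⟨a, r, s⟩ ⟨b, u, v⟩
  by_cases h : s = u
  · rcases hmono a b with h0 | ⟨z, hz, hpar⟩
    · simp [mulM, h, h0]
    · exact Or.inr ⟨(z, r, v), by simp [mulM, h, hz, Finsupp.mapDomain_single], hpar⟩
  · simp [mulM, h]

lemma injOn_ordM (ho : Set.InjOn S.ordA {x | S.pA x = 2}) :
    Set.InjOn (S.ordM n) {x | S.pM n x = 2} := by
  rintro ⟨a, r, s⟩ ha ⟨b, u, v⟩ hb h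
  obtain ⟨h1, h2⟩ := Nat.eq_and_eq_of_mul_add_eq_mul_add s.2 v.2 h
  obtain ⟨h3, h4⟩ := Nat.eq_and_eq_of_mul_add_eq_mul_add r.2 u.2 h1
  obtain rfl : a = b := ho ha hb h3
  obtain rfl := Fin.ext h4
  obtain rfl := Fin.ext h2
  rfl

end SchurAlgData

section Involution

variable {R M : Type} [CommRing R] [AddCommGroup M] [Module R M] {J : M →ₗ[R] M}

lemma Submodule.map_map_of_involutive (hJ : Function.Involutive J) (N : Submodule R M) :
    (N.map J).map J = N := by
  rw [← Submodule.map_comp, show J ∘ₗ J = LinearMap.id from LinearMap.ext hJ, Submodule.map_id]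

lemma Submodule.map_sInf_of_involutive (hJ : Function.Involutive J) (s : Set (Submodule R M)) :
    (sInf s).map J = sInf ((·.map J) '' s) := by
  rw [sInf_image]
  exact (Submodule.orderIsoMapComap (LinearEquiv.ofInvolutive J hJ)).map_sInf s

end Involution

namespace SchurAlgData

variable {F : Type} [CommRing F] {ℓ : ℕ} {S : SchurAlgData F ℓ} {n d : ℕ} [NeZero n]
  {J : TPow F (S.MBt n) d →ₗ[F] TPow F (S.MBt n) d}

variable (S n d) in
/-- The coordinate form of an anti-involution of `T^A(n,d)` fixing every `η_μ`. -/
structure IsTranspose (J : TPow F (S.MBt n) d →ₗ[F] TPow F (S.MBt n) d) : Prop where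
  involutive : Function.Involutive J
  mem_alg : ∀ x ∈ S.alg n d, J x ∈ S.alg n d
  map_amul : ∀ x v, J (S.amul n d x v) = S.ramul n d (J x) (J v)
  map_eta : ∀ μ : MultiComp ℓ n, J (S.eta n d μ) = S.eta n d μ

namespace IsTranspose

lemma map_ramul (hJ : S.IsTranspose n d J) (x v : TPow F (S.MBt n) d) :
    J (S.ramul n d x v) = S.amul n d (J x) (J v) := by
  conv_lhs => rw [← hJ.involutive x, ← hJ.involutive v, ← hJ.map_amul, hJ.involutive]

lemma rStable_map (hJ : S.IsTranspose n d J) {N : Submodule F (TPow F (S.MBt n) d)}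
    (hN : S.lStable n d N) : S.rStable n d (N.map J) := by
  rintro x hx _ ⟨u, hu, rfl⟩
  rw [← hJ.involutive x, ← hJ.map_amul]
  exact Submodule.mem_map_of_mem (hN _ (hJ.mem_alg _ hx) _ hu)

lemma lStable_map (hJ : S.IsTranspose n d J) {N : Submodule F (TPow F (S.MBt n) d)}
    (hN : S.rStable n d N) : S.lStable n d (N.map J) := by
  rintro x hx _ ⟨u, hu, rfl⟩
  rw [← hJ.involutive x, ← hJ.map_ramul]
  exact Submodule.mem_map_of_mem (hN _ (hJ.mem_alg _ hx) _ hu)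

lemma subset_map_iff (hJ : S.IsTranspose n d J) {T : Set (TPow F (S.MBt n) d)}
    {N : Submodule F (TPow F (S.MBt n) d)} : T ⊆ N.map J ↔ J '' T ⊆ N := by
  rw [Submodule.map_coe, Set.image_subset_iff,
    Set.image_eq_preimage_of_inverse hJ.involutive.leftInverse hJ.involutive.rightInverse]

lemma map_lIdeal (hJ : S.IsTranspose n d J) (T : Set (TPow F (S.MBt n) d)) :
    (S.lIdeal n d T).map J = S.rIdeal n d (J '' T) := by
  rw [lIdeal, rIdeal, Submodule.map_sInf_of_involutive hJ.involutive]
  congr 1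
  ext N
  constructor
  · rintro ⟨N, ⟨hT, hN⟩, rfl⟩
    exact ⟨(Submodule.map_coe J N).symm ▸ Set.image_mono hT, hJ.rStable_map hN⟩
  · rintro ⟨hT, hN⟩
    exact ⟨N.map J, ⟨hJ.subset_map_iff.2 hT, hJ.lStable_map hN⟩,
      Submodule.map_map_of_involutive hJ.involutive N⟩

lemma map_tIdeal (hJ : S.IsTranspose n d J) (T : Set (TPow F (S.MBt n) d)) :
    (S.tIdeal n d T).map J = S.tIdeal n d (J '' T) := by
  rw [tIdeal, tIdeal, Submodule.map_sInf_of_involutive hJ.involutive]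
  congr 1
  ext N
  constructor
  · rintro ⟨N, ⟨hT, hl, hr⟩, rfl⟩
    exact ⟨(Submodule.map_coe J N).symm ▸ Set.image_mono hT, hJ.lStable_map hr, hJ.rStable_map hl⟩
  · rintro ⟨hT, hl, hr⟩
    exact ⟨N.map J, ⟨hJ.subset_map_iff.2 hT, hJ.lStable_map hr, hJ.rStable_map hl⟩,
      Submodule.map_map_of_involutive hJ.involutive N⟩

lemma map_D1 (hJ : S.IsTranspose n d J) (lam : MultiComp ℓ n) :
    (S.D1 n d lam).map J = S.R1 n d lam := by
  rw [D1, map_lIdeal hJ, Set.image_singleton, hJ.map_eta, R1]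

lemma map_idealHi (hJ : S.IsTranspose n d J) (lam : MultiComp ℓ n) :
    (S.idealHi n d lam).map J = S.idealHi n d lam := by
  have hfix : J '' S.hiSet n d lam = S.hiSet n d lam := by
    refine (Set.image_congr ?_).trans (Set.image_id _)
    rintro _ ⟨μ, -, -, -, -, rfl⟩
    exact hJ.map_eta μ
  rw [idealHi, map_tIdeal hJ, hfix]

lemma map_D2 (hJ : S.IsTranspose n d J) (lam : MultiComp ℓ n) :
    (S.D2 n d lam).map J = S.R2 n d lam := by
  rw [D2, Submodule.map_inf _ hJ.involutive.injective, map_D1 hJ, map_idealHi hJ, R2]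

lemma map_eta_D1_sup_D2 (hJ : S.IsTranspose n d J) (lam μ : MultiComp ℓ n) :
    ((S.D1 n d lam).map (S.amul n d (S.eta n d μ)) ⊔ S.D2 n d lam).map J
      = (S.R1 n d lam).map (S.ramul n d (S.eta n d μ)) ⊔ S.R2 n d lam := by
  have hcomm : J ∘ₗ S.amul n d (S.eta n d μ) = S.ramul n d (S.eta n d μ) ∘ₗ J :=
    LinearMap.ext fun v => by simp [hJ.map_amul, hJ.map_eta]
  rw [Submodule.map_sup, map_D2 hJ, ← Submodule.map_comp, hcomm, Submodule.map_comp, map_D1 hJ]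

theorem finrank_eta_standard (hJ : S.IsTranspose n d J) (lam μ : MultiComp ℓ n) :
    Module.finrank F ↥((S.D1 n d lam).map (S.amul n d (S.eta n d μ)) ⊔ S.D2 n d lam)
        + Module.finrank F ↥(S.R2 n d lam)
      = Module.finrank F ↥((S.R1 n d lam).map (S.ramul n d (S.eta n d μ)) ⊔ S.R2 n d lam)
        + Module.finrank F ↥(S.D2 n d lam) := by
  have hrank (N : Submodule F (TPow F (S.MBt n) d)) :
      Module.finrank F ↥(N.map J) = Module.finrank F N :=
    (LinearEquiv.ofInvolutive J hJ.involutive).finrank_map_eq N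
  rw [← hrank ((S.D1 n d lam).map (S.amul n d (S.eta n d μ)) ⊔ S.D2 n d lam),
    map_eta_D1_sup_D2 hJ, ← hrank (S.D2 n d lam), map_D2 hJ]

end IsTranspose

theorem isTranspose_transposeTPow {τ : S.βA → S.βA} (hτ : Function.Involutive τ)
    (hp : ∀ x, S.pA (τ x) = S.pA x)
    (hmul : ∀ x y, S.mulA (τ y) (τ x) = Finsupp.mapDomain τ (S.mulA x y))
    (hmono : IsMonomialMul F S.pA S.mulA) (ho : Set.InjOn S.ordA {x | S.pA x = 2})
    (hfix : ∀ i, τ (S.eA i) = S.eA i) (heven : ∀ i, S.pA (S.eA i) ≠ 2) :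
    S.IsTranspose n d (transposeTPow F (S.pM n) (S.transposeM n τ) d) where
  involutive := transposeTPow_involutive (transposeM_involutive hτ) (pM_transposeM hp)
  mem_alg _ hx :=
    transposeTPow_mem_gammaTilde (transposeM_involutive hτ) (pM_transposeM hp) (injOn_ordM ho) hx
  map_amul :=
    transposeTPow_kact (pM_transposeM hp) (mulM_transposeM hmul) (isMonomialMul_mulM hmono)
  map_eta _ := transposeTPow_y_of_forall_fixed (transposeM_involutive hτ) (pM_transposeM hp)
    (injOn_ordM ho) (fun _ => by simp [transposeM, hfix]) fun _ => heven _

end SchurAlgData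

section Zigzag

variable {F : Type} [CommRing F] {ℓ : ℕ}

/-- The anti-involution of `Z` reversing every arrow: `a_{j,j+1} ↔ a_{j+1,j}`. -/
def tauZ : ZB ℓ → ZB ℓ
  | Sum.inl i => Sum.inl i
  | Sum.inr (Sum.inl j) => Sum.inr (Sum.inr (Sum.inl j))
  | Sum.inr (Sum.inr (Sum.inl j)) => Sum.inr (Sum.inl j)
  | Sum.inr (Sum.inr (Sum.inr j)) => Sum.inr (Sum.inr (Sum.inr j))

lemma tauZ_involutive : Function.Involutive (tauZ (ℓ := ℓ)) := by
  rintro (i | j | j | j) <;> rfl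

lemma pZ_tauZ (x : ZB ℓ) : pZ (tauZ x) = pZ x := by
  rcases x with i | j | j | j <;> rfl

lemma mulZ_tauZ (x y : ZB ℓ) :
    mulZ F (tauZ y) (tauZ x) = Finsupp.mapDomain tauZ (mulZ F x y) := by
  rcases x with i | j | j | j <;> rcases y with i' | j' | j' | j' <;>
    simp only [mulZ, tauZ, srcZ, tgtZ] <;> split_ifs <;>
    first
      | rfl
      | (simp_all [Finsupp.mapDomain_single, tauZ, cZ, Fin.castSucc_inj, Fin.succ_inj, eq_comm]
         done)
      | (simp only [Fin.castSucc_inj] at *; subst_vars; split_ifs <;>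
           simp [Finsupp.mapDomain_single, tauZ, cZ])

lemma isMonomialMul_mulZ : IsMonomialMul F pZ (mulZ F (ℓ := ℓ)) := by
  intro x y
  rcases x with i | j | j | j <;> rcases y with i' | j' | j' | j' <;>
    simp only [mulZ] <;> split_ifs <;>
    first
      | exact Or.inl rfl
      | exact Or.inr ⟨_, rfl, by simp [par2, pZ, cZ] <;> decide⟩

lemma injOn_ordZ : Set.InjOn (ordZ (ℓ := ℓ)) {x | pZ x = 2} := by
  rintro (i | j | j | j) hx (i' | j' | j' | j') hy h <;>
    simp [pZ, ordZ, Fin.ext_iff] at hx hy h ⊢ <;> omega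

end Zigzag

end

/-
Encoding: `Δ(λ)` is the subquotient `D1 λ / D2 λ` of the left regular module, so
`dim η_μ Δ(λ) = dim (η_μ · D1 λ ⊔ D2 λ) - dim D2 λ`.  The costandard module
`∇(λ)` is the linear dual of the right standard module `Δ^op(λ) = R1 λ / R2 λ`, and
`η_μ ∇(λ)` is dual to the image of right multiplication by `η_μ` on `Δ^op(λ)`, so
`dim η_μ ∇(λ) = dim (R1 λ · η_μ ⊔ R2 λ) - dim R2 λ`.  The equality of the two
dimensions is stated additively to avoid natural subtraction.
-/
theorem statement5_general
    (F : Type) [Field F]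
    (ℓ n d : ℕ) [NeZero n]
    (lam : MultiComp ℓ n)
    (μ : MultiComp ℓ n) :
    letI S := zigData F ℓ
    Module.finrank F
        ↥(Submodule.map (S.amul n d (S.eta n d μ)) (S.D1 n d lam) ⊔ S.D2 n d lam) +
      Module.finrank F ↥(S.R2 n d lam) =
    Module.finrank F
        ↥(Submodule.map (S.ramul n d (S.eta n d μ)) (S.R1 n d lam) ⊔ S.R2 n d lam) +
      Module.finrank F ↥(S.D2 n d lam) :=
  ((zigData F ℓ).isTranspose_transposeTPow tauZ_involutive pZ_tauZ mulZ_tauZ isMonomialMul_mulZ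
    injOn_ordZ (fun _ => rfl) fun _ => by simp [zigData, pZ, eZ]).finrank_eta_standard lam μ

theorem statement5
    (R : Type) [CommRing R] [IsDomain R] [IsPrincipalIdealRing R] [CharZero R]
    (F : Type) [Field F] [Algebra R F]
    (ℓ n d : ℕ) [NeZero n] (hℓ : 1 ≤ ℓ) (hdn : d ≤ n)
    (lam : MultiComp ℓ n) (hlamP : IsMultiPartition lam) (hlamd : mcSize lam = d)
    (μ : MultiComp ℓ n) (hμ : mcSize μ = d) :
    letI S := zigData F ℓ
    Module.finrank F
        ↥(Submodule.map (S.amul n d (S.eta n d μ)) (S.D1 n d lam) ⊔ S.D2 n d lam) +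
      Module.finrank F ↥(S.R2 n d lam) =
    Module.finrank F
        ↥(Submodule.map (S.ramul n d (S.eta n d μ)) (S.R1 n d lam) ⊔ S.R2 n d lam) +
      Module.finrank F ↥(S.D2 n d lam) :=
  statement5_general F ℓ n d lam μ

end Paper
end

section
/- Let B^A = B^A_𝔞 ⊔ B^A_𝔠 ⊔ B^A_1̄ and B^V = B^V_𝔞 ⊔ B^V_𝔠 ⊔ B^V_1̄ be finite sets, each partitioned into parts labelled 𝔞, 𝔠 and 1̄ (the elements of the 1̄-part are called odd). Let (m^b_{a,c})_{a∈B^A, b,c∈B^V} be non-negative integers such that m^b_{a,c} ≤ 1 whenever a ∈ B^A_1̄ or c ∈ B^V_1̄, and m^b_{a,c} = 0 whenever b ∈ B^V_𝔠, a ∈ B^A_𝔞 and c ∈ B^V_𝔞. Set [a] := Σ_{b,c∈B^V} m^b_{a,c} for a ∈ B^A, [c] := Σ_{a∈B^A, b∈B^V} m^b_{a,c} for c ∈ B^V, and [b] := Σ_{a∈B^A, c∈B^V} m^b_{a,c} for b ∈ B^V. Then the product ∏_{b∈B^V_𝔠} [b]! divides (∏_{a∈B^A_𝔠} [a]!) ·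 (∏_{c∈B^V_𝔠} [c]!) · ∏_{b∈B^V} ( [b]! / ∏_{a∈B^A, c∈B^V} m^b_{a,c}! ), where each factor [b]! / ∏_{a,c} m^b_{a,c}! is a multinomial coefficient, hence an integer. -/
/-!
STATEMENT 16: the key integrality claim: with `m^b_{a,c}` as given,
`∏_{b ∈ B^V_𝔠} [b]!` divides
`(∏_{a ∈ B^A_𝔠} [a]!) * (∏_{c ∈ B^V_𝔠} [c]!) * ∏_{b ∈ B^V} ([b]! / ∏_{a,c} m^b_{a,c}!)`,
the last factors being multinomial coefficients.

Encoding: `BA`, `BV` are the finite sets, with partitions into the parts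
`𝔞/𝔠/odd` recorded by `partA, partV : _ → Fin 3` (`0 = 𝔞`, `1 = 𝔠`, `2 = odd`);
`m a b c` stands for `m^b_{a,c}`.
-/

open Finset

private lemma fin3cases (x : Fin 3) : x = 0 ∨ x = 1 ∨ x = 2 := by fin_cases x <;> simp

theorem statement16
    (BA BV : Type) [Fintype BA] [Fintype BV] [DecidableEq BA] [DecidableEq BV]
    (partA : BA → Fin 3) (partV : BV → Fin 3)
    (m : BA → BV → BV → ℕ)
    (hodd : ∀ a b c, (partA a = 2 ∨ partV c = 2) → m a b c ≤ 1)
    (hcal : ∀ a b c, partV b = 1 → partA a = 0 → partV c = 0 → m a b c = 0) :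
    (∏ b ∈ univ.filter (fun b : BV => partV b = 1),
        (∑ a : BA, ∑ c : BV, m a b c).factorial) ∣
      (∏ a ∈ univ.filter (fun a : BA => partA a = 1),
          (∑ b : BV, ∑ c : BV, m a b c).factorial) *
        (∏ c ∈ univ.filter (fun c : BV => partV c = 1),
          (∑ a : BA, ∑ b : BV, m a b c).factorial) *
        ∏ b : BV, Nat.multinomial univ (fun q : BA × BV => m q.1 b q.2) := by
  classical
  set Ac : Finset BA := univ.filter (fun a => partA a = 1) with hAcdef
  set An : Finset BA := univ.filter (fun a => ¬ partA a = 1) with hAndef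
  set Vc : Finset BV := univ.filter (fun b => partV b = 1) with hVcdef
  -- multinomial spec for each b
  have hspec : ∀ b : BV, (∑ a : BA, ∑ c : BV, m a b c).factorial
      = (∏ q : BA × BV, (m q.1 b q.2).factorial)
        * Nat.multinomial univ (fun q : BA × BV => m q.1 b q.2) := by
    intro b
    have h1 : (∑ a : BA, ∑ c : BV, m a b c) = ∑ q : BA × BV, m q.1 b q.2 := by
      rw [Fintype.sum_prod_type]
    rw [h1]
    exact (Nat.multinomial_spec _ _).symm
  -- splitting of the inner product for b ∈ Vc
  have hPb : ∀ b ∈ Vc, (∏ q : BA × BV, (m q.1 b q.2).factorial)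
      = (∏ q ∈ Ac ×ˢ (univ : Finset BV), (m q.1 b q.2).factorial)
        * ∏ q ∈ An ×ˢ Vc, (m q.1 b q.2).factorial := by
    intro b hb
    have hbV : partV b = 1 := (mem_filter.mp hb).2
    have hdisj : Disjoint (Ac ×ˢ (univ : Finset BV)) (An ×ˢ Vc) := by
      rw [Finset.disjoint_left]
      intro q hq hq'
      have h1 := (mem_filter.mp (mem_product.mp hq).1).2
      have h2 := (mem_filter.mp (mem_product.mp hq').1).2
      exact h2 h1
    rw [← prod_union hdisj]
    refine (prod_subset (subset_univ _) ?_).symm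
    intro q _ hq
    rw [mem_union] at hq
    push_neg at hq
    have h1 : ¬ partA q.1 = 1 := fun h =>
      hq.1 (mem_product.mpr ⟨mem_filter.mpr ⟨mem_univ _, h⟩, mem_univ _⟩)
    have h2 : ¬ partV q.2 = 1 := fun h =>
      hq.2 (mem_product.mpr ⟨mem_filter.mpr ⟨mem_univ _, h1⟩, mem_filter.mpr ⟨mem_univ _, h⟩⟩)
    rw [Nat.factorial_eq_one]
    rcases fin3cases (partA q.1) with ha | ha | ha
    · rcases fin3cases (partV q.2) with hc | hc | hc
      · rw [hcal q.1 b q.2 hbV ha hc]; exact Nat.zero_le _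
      · exact absurd hc h2
      · exact hodd _ _ _ (Or.inr hc)
    · exact absurd ha h1
    · exact hodd _ _ _ (Or.inl ha)
  -- the A-side divisibility
  have hKA : (∏ b ∈ Vc, ∏ q ∈ Ac ×ˢ (univ : Finset BV), (m q.1 b q.2).factorial)
      ∣ ∏ a ∈ Ac, (∑ b : BV, ∑ c : BV, m a b c).factorial := by
    rw [prod_comm, prod_product]
    refine Finset.prod_dvd_prod_of_dvd _ _ ?_
    intro a _
    have h0 : (∏ c : BV, ∏ b ∈ Vc, (m a b c).factorial)
        = ∏ q ∈ Vc ×ˢ (univ : Finset BV), (m a q.1 q.2).factorial := by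
      rw [prod_product, prod_comm]
    rw [h0]
    refine dvd_trans (Nat.prod_factorial_dvd_factorial_sum _ _) ?_
    refine Nat.factorial_dvd_factorial ?_
    have hle : (∑ q ∈ Vc ×ˢ (univ : Finset BV), m a q.1 q.2)
        ≤ ∑ q : BV × BV, m a q.1 q.2 :=
      Finset.sum_le_sum_of_subset (subset_univ _)
    rwa [Fintype.sum_prod_type] at hle
  -- the C-side divisibility
  have hKC : (∏ b ∈ Vc, ∏ q ∈ An ×ˢ Vc, (m q.1 b q.2).factorial)
      ∣ ∏ c ∈ Vc, (∑ a : BA, ∑ b : BV, m a b c).factorial := by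
    rw [prod_comm, prod_product, prod_comm]
    refine Finset.prod_dvd_prod_of_dvd _ _ ?_
    intro c _
    have h0 : (∏ a ∈ An, ∏ b ∈ Vc, (m a b c).factorial)
        = ∏ q ∈ An ×ˢ Vc, (m q.1 q.2 c).factorial := by
      rw [prod_product]
    rw [h0]
    refine dvd_trans (Nat.prod_factorial_dvd_factorial_sum _ _) ?_
    refine Nat.factorial_dvd_factorial ?_
    have hle : (∑ q ∈ An ×ˢ Vc, m q.1 q.2 c)
        ≤ ∑ q : BA × BV, m q.1 q.2 c :=
      Finset.sum_le_sum_of_subset (subset_univ _)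
    rwa [Fintype.sum_prod_type] at hle
  -- assemble
  calc (∏ b ∈ Vc, (∑ a : BA, ∑ c : BV, m a b c).factorial)
      = (∏ b ∈ Vc, ∏ q : BA × BV, (m q.1 b q.2).factorial)
        * ∏ b ∈ Vc, Nat.multinomial univ (fun q : BA × BV => m q.1 b q.2) := by
        rw [← prod_mul_distrib]; exact prod_congr rfl (fun b _ => hspec b)
    _ = ((∏ b ∈ Vc, ∏ q ∈ Ac ×ˢ (univ : Finset BV), (m q.1 b q.2).factorial)
          * ∏ b ∈ Vc, ∏ q ∈ An ×ˢ Vc, (m q.1 b q.2).factorial)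
        * ∏ b ∈ Vc, Nat.multinomial univ (fun q : BA × BV => m q.1 b q.2) := by
        congr 1
        rw [← prod_mul_distrib]
        exact prod_congr rfl hPb
    _ ∣ ((∏ a ∈ Ac, (∑ b : BV, ∑ c : BV, m a b c).factorial)
          * ∏ c ∈ Vc, (∑ a : BA, ∑ b : BV, m a b c).factorial)
        * ∏ b ∈ Vc, Nat.multinomial univ (fun q : BA × BV => m q.1 b q.2) :=
        mul_dvd_mul (mul_dvd_mul hKA hKC) dvd_rfl
    _ ∣ (∏ a ∈ Ac, (∑ b : BV, ∑ c : BV, m a b c).factorial)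
          * (∏ c ∈ Vc, (∑ a : BA, ∑ b : BV, m a b c).factorial)
        * ∏ b : BV, Nat.multinomial univ (fun q : BA × BV => m q.1 b q.2) := by
        refine mul_dvd_mul dvd_rfl ?_
        exact Finset.prod_dvd_prod_of_subset _ _ _ (subset_univ _)
end
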